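/- arXiv:1710.01192 — 6 statements merged into one kernel-verified Lean document; each statement's English description precedes it below -/
import Mathlib

section
/- Let k1, k2, m1, m2 > 0 with k1 ≠ m1, and set α1 = min(k1, m1). Let X1, Y1, X2, Y2 be independent real random variables with Xℓ distributed Gamma(kℓ, 1) and Yℓ distributed Gamma(mℓ, 1) for ℓ = 1, 2. Then lim_{t → 0+} t^{−α1} · P(X1·Y1 ≤ t · X2·Y2) = Γ(|k1 − m1|) · Γ(k2 + α1) · Γ(m2 + α1) / (α1 · Γ(k1) · Γ(m1) · Γ(k2) · Γ(m2)). -/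
open MeasureTheory ProbabilityTheory Filter Real Set
open scoped ENNReal NNReal

namespace GammaAux


lemma lint_rpow {a c K : ℝ} (ha : 0 < a) (hc : 0 ≤ c) (hK : 0 ≤ K) :
    ∫⁻ x in Ioc 0 c, ENNReal.ofReal (K * x ^ (a - 1)) = ENNReal.ofReal (K * (c ^ a / a)) := by
  have hint : IntegrableOn (fun x : ℝ => K * x ^ (a - 1)) (Ioc 0 c) := by
    have h1 : IntervalIntegrable (fun x : ℝ => x ^ (a - 1)) volume 0 c :=
      intervalIntegral.intervalIntegrable_rpow' (by linarith)
    rw [intervalIntegrable_iff_integrableOn_Ioc_of_le hc] at h1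
    exact h1.const_mul K
  rw [← ofReal_integral_eq_lintegral_ofReal hint ?_]
  · congr 1
    rw [MeasureTheory.integral_const_mul]
    have : ∫ x in Ioc 0 c, x ^ (a - 1) = c ^ a / a := by
      rw [← intervalIntegral.integral_of_le hc, integral_rpow (Or.inl (by linarith))]
      rw [Real.zero_rpow (by linarith : a - 1 + 1 ≠ 0)]
      rw [show a - 1 + 1 = a by ring]
      ring
    rw [this]
  · filter_upwards [ae_restrict_mem measurableSet_Ioc] with x hx
    exact mul_nonneg hK (Real.rpow_nonneg hx.1.le _)

lemma gammaMeasure_Iic {a c : ℝ} (hc : 0 ≤ c) :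
    gammaMeasure a 1 (Iic c) = ∫⁻ x in Ioc 0 c, gammaPDF a 1 x := by
  rw [gammaMeasure, withDensity_apply _ measurableSet_Iic, ← Iic_union_Ioc_eq_Iic hc,
    lintegral_union measurableSet_Ioc (Set.Iic_disjoint_Ioc le_rfl)]
  have h0 : ∫⁻ x in Iic (0:ℝ), gammaPDF a 1 x = 0 := by
    rw [← setLIntegral_congr (Iio_ae_eq_Iic (a := (0:ℝ)) (μ := volume))]
    exact lintegral_gammaPDF_of_nonpos le_rfl
  rw [h0, zero_add]

lemma gamma_Iic_zero {a : ℝ} : gammaMeasure a 1 (Iic 0) = 0 := by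
  rw [gammaMeasure_Iic le_rfl, Set.Ioc_self, Measure.restrict_empty, lintegral_zero_measure]

lemma gamma_ae_pos {a : ℝ} : ∀ᵐ x ∂(gammaMeasure a 1), 0 < x := by
  rw [ae_iff]
  have h : {x : ℝ | ¬ 0 < x} = Iic 0 := by ext x; simp
  rw [h]; exact gamma_Iic_zero

lemma gammaCDF_le {a c : ℝ} (ha : 0 < a) (hc : 0 ≤ c) :
    gammaMeasure a 1 (Iic c) ≤ ENNReal.ofReal ((1 / Real.Gamma a) * (c ^ a / a)) := by
  rw [gammaMeasure_Iic hc, ← lint_rpow ha hc (by positivity : (0:ℝ) ≤ 1 / Real.Gamma a)]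
  refine setLIntegral_mono (by measurability) fun x hx => ?_
  rw [gammaPDF_of_nonneg hx.1.le]
  apply ENNReal.ofReal_le_ofReal
  rw [Real.one_rpow]
  have h1 : Real.exp (-(1 * x)) ≤ 1 := by
    rw [Real.exp_le_one_iff]; linarith [hx.1]
  have h2 : (0:ℝ) ≤ 1 / Real.Gamma a * x ^ (a - 1) :=
    mul_nonneg (by positivity) (Real.rpow_nonneg hx.1.le _)
  calc 1 / Real.Gamma a * x ^ (a - 1) * Real.exp (-(1 * x))
      ≤ 1 / Real.Gamma a * x ^ (a - 1) * 1 := by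
        exact mul_le_mul_of_nonneg_left h1 h2
    _ = 1 / Real.Gamma a * x ^ (a - 1) := by ring

lemma gammaCDF_ge {a c : ℝ} (ha : 0 < a) (hc : 0 ≤ c) :
    ENNReal.ofReal ((Real.exp (-c) / Real.Gamma a) * (c ^ a / a)) ≤ gammaMeasure a 1 (Iic c) := by
  rw [gammaMeasure_Iic hc,
    ← lint_rpow ha hc (by positivity : (0:ℝ) ≤ Real.exp (-c) / Real.Gamma a)]
  refine setLIntegral_mono (by
    apply Measurable.ennreal_ofReal
    exact measurable_gammaPDFReal a 1) fun x hx => ?_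
  rw [gammaPDF_of_nonneg hx.1.le]
  apply ENNReal.ofReal_le_ofReal
  rw [Real.one_rpow]
  have h1 : Real.exp (-c) ≤ Real.exp (-(1 * x)) := by
    apply Real.exp_le_exp.mpr; linarith [hx.2]
  have h2 : (0:ℝ) ≤ x ^ (a - 1) := Real.rpow_nonneg hx.1.le _
  have hg : (0:ℝ) < Real.Gamma a := Real.Gamma_pos_of_pos ha
  calc Real.exp (-c) / Real.Gamma a * x ^ (a - 1)
      = 1 / Real.Gamma a * x ^ (a - 1) * Real.exp (-c) := by ring
    _ ≤ 1 / Real.Gamma a * x ^ (a - 1) * Real.exp (-(1 * x)) :=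
        mul_le_mul_of_nonneg_left h1 (mul_nonneg (by positivity) h2)
    _ = 1 / Real.Gamma a * x ^ (a - 1) * Real.exp (-(1 * x)) := rfl

lemma rpow_calc {t s a : ℝ} (ht : 0 < t) (hs : 0 < s) :
    t ^ (-a) * (t * s) ^ a = s ^ a := by
  rw [Real.mul_rpow ht.le hs.le, Real.rpow_neg ht.le]
  field_simp

lemma gamma_cdf_tendsto {a s : ℝ} (ha : 0 < a) (hs : 0 < s) :
    Tendsto (fun t : ℝ => t ^ (-a) * (gammaMeasure a 1 (Iic (t * s))).toReal)
      (nhdsWithin 0 (Set.Ioi 0)) (nhds (1 / Real.Gamma a * (s ^ a / a))) := by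
  have hmem : ∀ᶠ t in nhdsWithin (0:ℝ) (Set.Ioi 0), t ∈ Set.Ioi (0:ℝ) :=
    eventually_mem_nhdsWithin
  haveI : IsProbabilityMeasure (gammaMeasure a 1) := isProbabilityMeasure_gammaMeasure ha one_pos
  have hub : ∀ᶠ t in nhdsWithin (0:ℝ) (Set.Ioi 0),
      t ^ (-a) * (gammaMeasure a 1 (Iic (t * s))).toReal ≤ 1 / Real.Gamma a * (s ^ a / a) := by
    filter_upwards [hmem] with t ht
    have ht : (0:ℝ) < t := ht
    have hts : 0 ≤ t * s := by positivity
    have h1 : (gammaMeasure a 1 (Iic (t * s))).toReal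
        ≤ 1 / Real.Gamma a * ((t * s) ^ a / a) := by
      apply ENNReal.toReal_le_of_le_ofReal (by positivity) (gammaCDF_le ha hts)
    calc t ^ (-a) * (gammaMeasure a 1 (Iic (t * s))).toReal
        ≤ t ^ (-a) * (1 / Real.Gamma a * ((t * s) ^ a / a)) :=
          mul_le_mul_of_nonneg_left h1 (Real.rpow_nonneg ht.le _)
      _ = 1 / Real.Gamma a * ((t ^ (-a) * (t * s) ^ a) / a) := by ring
      _ = 1 / Real.Gamma a * (s ^ a / a) := by rw [rpow_calc ht hs]
  have hlb : ∀ᶠ t in nhdsWithin (0:ℝ) (Set.Ioi 0),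
      Real.exp (-(t * s)) * (1 / Real.Gamma a * (s ^ a / a))
        ≤ t ^ (-a) * (gammaMeasure a 1 (Iic (t * s))).toReal := by
    filter_upwards [hmem] with t ht
    have ht : (0:ℝ) < t := ht
    have hts : 0 ≤ t * s := by positivity
    have h1 : Real.exp (-(t * s)) / Real.Gamma a * ((t * s) ^ a / a)
        ≤ (gammaMeasure a 1 (Iic (t * s))).toReal := by
      have h2 := ENNReal.toReal_mono (measure_ne_top _ _) (gammaCDF_ge ha hts)
      rwa [ENNReal.toReal_ofReal (by positivity)] at h2
    calc Real.exp (-(t * s)) * (1 / Real.Gamma a * (s ^ a / a))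
        = Real.exp (-(t * s)) * (1 / Real.Gamma a * ((t ^ (-a) * (t * s) ^ a) / a)) := by
          rw [rpow_calc ht hs]
      _ = t ^ (-a) * (Real.exp (-(t * s)) / Real.Gamma a * ((t * s) ^ a / a)) := by ring
      _ ≤ t ^ (-a) * (gammaMeasure a 1 (Iic (t * s))).toReal :=
          mul_le_mul_of_nonneg_left h1 (Real.rpow_nonneg ht.le _)
  have hlo : Tendsto (fun t : ℝ => Real.exp (-(t * s)) * (1 / Real.Gamma a * (s ^ a / a)))
      (nhdsWithin 0 (Set.Ioi 0)) (nhds (1 / Real.Gamma a * (s ^ a / a))) := by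
    have h1 : Tendsto (fun t : ℝ => Real.exp (-(t * s))) (nhds 0) (nhds 1) := by
      have hc : Continuous (fun t : ℝ => Real.exp (-(t * s))) := by fun_prop
      have := hc.tendsto 0
      simpa using this
    have h2 : Tendsto (fun t : ℝ => Real.exp (-(t * s))) (nhdsWithin 0 (Set.Ioi 0)) (nhds 1) :=
      h1.mono_left nhdsWithin_le_nhds
    have := h2.mul_const (1 / Real.Gamma a * (s ^ a / a))
    simpa using this
  exact tendsto_of_tendsto_of_tendsto_of_le_of_le' hlo tendsto_const_nhds hlb hub

lemma gamma_moment {a p : ℝ} (ha : 0 < a) (hp : 0 < a + p) :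
    ∫⁻ x, ENNReal.ofReal (x ^ p) ∂(gammaMeasure a 1)
      = ENNReal.ofReal (Real.Gamma (a + p) / Real.Gamma a) := by
  have hmeas : Measurable fun x : ℝ => ENNReal.ofReal (x ^ p) :=
    (measurable_id.pow measurable_const).ennreal_ofReal
  have hpdf : Measurable (gammaPDF a 1) := (measurable_gammaPDFReal a 1).ennreal_ofReal
  rw [gammaMeasure, lintegral_withDensity_eq_lintegral_mul _ hpdf hmeas]
  rw [← lintegral_add_compl (fun x => (gammaPDF a 1 * fun x => ENNReal.ofReal (x ^ p)) x)
    (measurableSet_Ioi (a := (0:ℝ)))]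
  have h2 : ∫⁻ x in (Set.Ioi (0:ℝ))ᶜ, (gammaPDF a 1 * fun x => ENNReal.ofReal (x ^ p)) x = 0 := by
    rw [compl_Ioi, ← setLIntegral_congr (Iio_ae_eq_Iic (a := (0:ℝ)) (μ := volume))]
    rw [setLIntegral_congr_fun (g := fun _ => (0:ℝ≥0∞)) measurableSet_Iio
      (fun x (hx : x < 0) => by
        simp [Pi.mul_apply, gammaPDF_of_neg hx])]
    simp
  rw [h2, add_zero]
  have h3 : ∫⁻ x in Set.Ioi (0:ℝ), (gammaPDF a 1 * fun x => ENNReal.ofReal (x ^ p)) x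
      = ∫⁻ x in Set.Ioi (0:ℝ),
        ENNReal.ofReal (1 / Real.Gamma a * (Real.exp (-x) * x ^ (a + p - 1))) := by
    apply setLIntegral_congr_fun measurableSet_Ioi
    intro x hx
    have hx : (0:ℝ) < x := hx
    rw [Pi.mul_apply, gammaPDF_of_nonneg hx.le, ← ENNReal.ofReal_mul (by positivity)]
    congr 1
    rw [Real.one_rpow, show a + p - 1 = (a - 1) + p by ring, Real.rpow_add hx]
    ring
  rw [h3]
  have hint : IntegrableOn (fun x : ℝ => 1 / Real.Gamma a * (Real.exp (-x) * x ^ (a + p - 1)))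
      (Set.Ioi 0) := by
    exact (Real.GammaIntegral_convergent hp).const_mul _
  rw [← ofReal_integral_eq_lintegral_ofReal hint ?_]
  · congr 1
    rw [MeasureTheory.integral_const_mul]
    rw [show (a + p - 1) = (a + p) - 1 by ring, ← Real.Gamma_eq_integral hp]
    rw [one_div_mul_eq_div]
  · filter_upwards [ae_restrict_mem measurableSet_Ioi] with x hx
    have hx : (0:ℝ) < x := hx
    positivity

lemma bound_calc {t u v y a G : ℝ} (ht : 0 < t) (hu : 0 < u) (hv : 0 < v) (hy : 0 < y)
    (haa : 0 < a) (hG : 0 < G) :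
    t ^ (-a) * (1 / G * ((t * (u * v) / y) ^ a / a))
      = u ^ a * v ^ a * (y ^ (-a) * (1 / (a * G))) := by
  rw [Real.div_rpow (by positivity) hy.le, Real.mul_rpow ht.le (by positivity),
    Real.mul_rpow hu.le hv.le, Real.rpow_neg ht.le, Real.rpow_neg hy.le]
  have h1 : (0:ℝ) < t ^ a := Real.rpow_pos_of_pos ht a
  have h2 : (0:ℝ) < y ^ a := Real.rpow_pos_of_pos hy a
  field_simp

lemma bound_calc2 {u v y a G : ℝ} (hu : 0 < u) (hv : 0 < v) (hy : 0 < y)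
    (haa : 0 < a) (hG : 0 < G) :
    1 / G * ((u * v / y) ^ a / a) = u ^ a * v ^ a * (y ^ (-a) * (1 / (a * G))) := by
  rw [Real.div_rpow (by positivity) hy.le, Real.mul_rpow hu.le hv.le, Real.rpow_neg hy.le]
  have h2 : (0:ℝ) < y ^ a := Real.rpow_pos_of_pos hy a
  field_simp

theorem gamma_aux (k₁ k₂ m₁ m₂ : ℝ) (hk₁ : 0 < k₁) (hk₂ : 0 < k₂) (hm₁ : 0 < m₁)
    (hm₂ : 0 < m₂) (hlt : k₁ < m₁) :
    Tendsto (fun t : ℝ => t ^ (-k₁) *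
      ((((gammaMeasure k₁ 1).prod (gammaMeasure m₁ 1)).prod
        ((gammaMeasure k₂ 1).prod (gammaMeasure m₂ 1)))
        {p : (ℝ × ℝ) × ℝ × ℝ | p.1.1 * p.1.2 ≤ t * (p.2.1 * p.2.2)}).toReal)
      (nhdsWithin 0 (Set.Ioi 0))
      (nhds (Real.Gamma (m₁ - k₁) * Real.Gamma (k₂ + k₁) * Real.Gamma (m₂ + k₁) /
        (k₁ * Real.Gamma k₁ * Real.Gamma m₁ * Real.Gamma k₂ * Real.Gamma m₂))) := by
  haveI i1 : IsProbabilityMeasure (gammaMeasure k₁ 1) := isProbabilityMeasure_gammaMeasure hk₁ one_pos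
  haveI i2 : IsProbabilityMeasure (gammaMeasure m₁ 1) := isProbabilityMeasure_gammaMeasure hm₁ one_pos
  haveI i3 : IsProbabilityMeasure (gammaMeasure k₂ 1) := isProbabilityMeasure_gammaMeasure hk₂ one_pos
  haveI i4 : IsProbabilityMeasure (gammaMeasure m₂ 1) := isProbabilityMeasure_gammaMeasure hm₂ one_pos
  set μ1 := gammaMeasure k₁ 1 with hμ1
  set ρ' : Measure (ℝ × ℝ) := (gammaMeasure k₂ 1).prod (gammaMeasure m₂ 1) with hρ'
  set ρ : Measure ((ℝ × ℝ) × ℝ) := ρ'.prod (gammaMeasure m₁ 1) with hρ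
  set bigμ : Measure ((ℝ × ℝ) × ℝ × ℝ) :=
    ((gammaMeasure k₁ 1).prod (gammaMeasure m₁ 1)).prod ρ' with hbigμ
  have hGk₁ : (0:ℝ) < Real.Gamma k₁ := Real.Gamma_pos_of_pos hk₁
  -- measurability of sets
  have hSt : ∀ t : ℝ, MeasurableSet {p : (ℝ × ℝ) × ℝ × ℝ | p.1.1 * p.1.2 ≤ t * (p.2.1 * p.2.2)} :=
    fun t => measurableSet_le (by fun_prop) (by fun_prop)
  have hT : ∀ t : ℝ, MeasurableSet
      {q : ((ℝ × ℝ) × ℝ) × ℝ | q.2 * q.1.2 ≤ t * (q.1.1.1 * q.1.1.2)} :=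
    fun t => measurableSet_le (by fun_prop) (by fun_prop)
  -- the inner measure function and its measurability
  have hInner : ∀ t : ℝ, Measurable
      (fun q : (ℝ × ℝ) × ℝ => μ1 {x | x * q.2 ≤ t * (q.1.1 * q.1.2)}) := by
    intro t
    have : (fun q : (ℝ × ℝ) × ℝ => μ1 {x | x * q.2 ≤ t * (q.1.1 * q.1.2)})
        = fun q => μ1 (Prod.mk q ⁻¹' {q : ((ℝ × ℝ) × ℝ) × ℝ | q.2 * q.1.2 ≤ t * (q.1.1.1 * q.1.1.2)}) := rfl
    rw [this]
    exact measurable_measure_prodMk_left (hT t)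
  -- Step A : express bigμ (S t) as an integral over ρ
  have key : ∀ t : ℝ, bigμ {p : (ℝ × ℝ) × ℝ × ℝ | p.1.1 * p.1.2 ≤ t * (p.2.1 * p.2.2)}
      = ∫⁻ q, μ1 {x | x * q.2 ≤ t * (q.1.1 * q.1.2)} ∂ρ := by
    intro t
    rw [hbigμ, Measure.prod_apply_symm (hSt t)]
    rw [hρ, lintegral_prod _ (hInner t).aemeasurable]
    apply lintegral_congr
    intro w
    have hpre : ((fun x : ℝ × ℝ => (x, w)) ⁻¹'
        {p : (ℝ × ℝ) × ℝ × ℝ | p.1.1 * p.1.2 ≤ t * (p.2.1 * p.2.2)})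
        = {z : ℝ × ℝ | z.1 * z.2 ≤ t * (w.1 * w.2)} := rfl
    rw [hpre, Measure.prod_apply_symm (measurableSet_le (by fun_prop) (by fun_prop))]
    rfl
  -- a.e. positivity
  have ha1 : ∀ᵐ q ∂ρ, 0 < q.1.1 := by
    rw [ae_iff]
    have h : {q : (ℝ × ℝ) × ℝ | ¬ 0 < q.1.1} = (Iic 0 ×ˢ (univ : Set ℝ)) ×ˢ (univ : Set ℝ) := by
      ext ⟨⟨u, v⟩, y⟩; simp [not_lt]
    rw [h, hρ, hρ', Measure.prod_prod, Measure.prod_prod, gamma_Iic_zero]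
    simp
  have ha2 : ∀ᵐ q ∂ρ, 0 < q.1.2 := by
    rw [ae_iff]
    have h : {q : (ℝ × ℝ) × ℝ | ¬ 0 < q.1.2} = ((univ : Set ℝ) ×ˢ Iic 0) ×ˢ (univ : Set ℝ) := by
      ext ⟨⟨u, v⟩, y⟩; simp [not_lt]
    rw [h, hρ, hρ', Measure.prod_prod, Measure.prod_prod, gamma_Iic_zero]
    simp
  have ha3 : ∀ᵐ q ∂ρ, 0 < q.2 := by
    rw [ae_iff]
    have h : {q : (ℝ × ℝ) × ℝ | ¬ 0 < q.2} = ((univ : Set (ℝ × ℝ))) ×ˢ Iic 0 := by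
      ext ⟨⟨u, v⟩, y⟩; simp [not_lt]
    rw [h, hρ, Measure.prod_prod, gamma_Iic_zero]
    simp
  have hae : ∀ᵐ q ∂ρ, 0 < q.1.1 ∧ 0 < q.1.2 ∧ 0 < q.2 := by
    filter_upwards [ha1, ha2, ha3] with q h1 h2 h3
    exact ⟨h1, h2, h3⟩
  -- the family of functions and bound
  set F : ℝ → ((ℝ × ℝ) × ℝ) → ℝ≥0∞ := fun t q =>
    ENNReal.ofReal (t ^ (-k₁)) * μ1 {x | x * q.2 ≤ t * (q.1.1 * q.1.2)} with hF
  set bound : ((ℝ × ℝ) × ℝ) → ℝ≥0∞ := fun q =>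
    (ENNReal.ofReal (q.1.1 ^ k₁) * ENNReal.ofReal (q.1.2 ^ k₁)) *
      (ENNReal.ofReal (q.2 ^ (-k₁)) * ENNReal.ofReal (1 / (k₁ * Real.Gamma k₁))) with hbound
  have hFmeas : ∀ t : ℝ, Measurable (F t) := fun t => (hInner t).const_mul _
  -- value of the bound integral
  have hboundint : ∫⁻ q, bound q ∂ρ =
      (ENNReal.ofReal (Real.Gamma (k₂ + k₁) / Real.Gamma k₂) *
        ENNReal.ofReal (Real.Gamma (m₂ + k₁) / Real.Gamma m₂)) *
      (ENNReal.ofReal (Real.Gamma (m₁ + -k₁) / Real.Gamma m₁) *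
        ENNReal.ofReal (1 / (k₁ * Real.Gamma k₁))) := by
    rw [hρ, lintegral_prod_mul
      (f := fun w : ℝ × ℝ => ENNReal.ofReal (w.1 ^ k₁) * ENNReal.ofReal (w.2 ^ k₁))
      (g := fun y : ℝ => ENNReal.ofReal (y ^ (-k₁)) * ENNReal.ofReal (1 / (k₁ * Real.Gamma k₁)))
      (by fun_prop) (by fun_prop)]
    rw [hρ', lintegral_prod_mul (f := fun x : ℝ => ENNReal.ofReal (x ^ k₁))
      (g := fun x : ℝ => ENNReal.ofReal (x ^ k₁)) (by fun_prop) (by fun_prop)]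
    rw [lintegral_mul_const _ (by fun_prop)]
    rw [gamma_moment hk₂ (by linarith), gamma_moment hm₂ (by linarith),
      gamma_moment hm₁ (by linarith)]
  have hboundne : ∫⁻ q, bound q ∂ρ ≠ ⊤ := by
    rw [hboundint]
    exact ENNReal.mul_ne_top
      (ENNReal.mul_ne_top ENNReal.ofReal_ne_top ENNReal.ofReal_ne_top)
      (ENNReal.mul_ne_top ENNReal.ofReal_ne_top ENNReal.ofReal_ne_top)
  -- domination
  have h_bound : ∀ᶠ t in nhdsWithin (0:ℝ) (Set.Ioi 0), ∀ᵐ q ∂ρ, F t q ≤ bound q := by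
    filter_upwards [eventually_mem_nhdsWithin] with t ht
    have ht : (0:ℝ) < t := ht
    filter_upwards [hae] with q hq
    obtain ⟨hu, hv, hy⟩ := hq
    have hset : {x | x * q.2 ≤ t * (q.1.1 * q.1.2)} = Iic (t * (q.1.1 * q.1.2) / q.2) := by
      ext x; simp only [mem_setOf_eq, mem_Iic]
      rw [le_div_iff₀ hy]
    have hc : (0:ℝ) ≤ t * (q.1.1 * q.1.2) / q.2 := by positivity
    calc F t q = ENNReal.ofReal (t ^ (-k₁)) * μ1 (Iic (t * (q.1.1 * q.1.2) / q.2)) := by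
          rw [hF]; simp only; rw [hset]
      _ ≤ ENNReal.ofReal (t ^ (-k₁)) *
          ENNReal.ofReal (1 / Real.Gamma k₁ * ((t * (q.1.1 * q.1.2) / q.2) ^ k₁ / k₁)) :=
          mul_le_mul_right (gammaCDF_le hk₁ hc) _
      _ = ENNReal.ofReal (t ^ (-k₁) *
          (1 / Real.Gamma k₁ * ((t * (q.1.1 * q.1.2) / q.2) ^ k₁ / k₁))) := by
          rw [ENNReal.ofReal_mul (Real.rpow_nonneg ht.le _)]
      _ = ENNReal.ofReal (q.1.1 ^ k₁ * q.1.2 ^ k₁ * (q.2 ^ (-k₁) * (1 / (k₁ * Real.Gamma k₁)))) := by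
          rw [bound_calc ht hu hv hy hk₁ hGk₁]
      _ = bound q := by
          rw [hbound]; simp only
          rw [← ENNReal.ofReal_mul (by positivity), ← ENNReal.ofReal_mul (by positivity),
            ← ENNReal.ofReal_mul (by positivity)]
  -- pointwise limit
  have h_lim : ∀ᵐ q ∂ρ, Tendsto (fun t => F t q) (nhdsWithin (0:ℝ) (Set.Ioi 0))
      (nhds (bound q)) := by
    filter_upwards [hae] with q hq
    obtain ⟨hu, hv, hy⟩ := hq
    have hs : (0:ℝ) < q.1.1 * q.1.2 / q.2 := by positivity
    have h1 := (ENNReal.continuous_ofReal.tendsto _).comp (gamma_cdf_tendsto hk₁ hs)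
    have h2 : ENNReal.ofReal (1 / Real.Gamma k₁ * ((q.1.1 * q.1.2 / q.2) ^ k₁ / k₁)) = bound q := by
      rw [bound_calc2 hu hv hy hk₁ hGk₁, hbound]; simp only
      rw [← ENNReal.ofReal_mul (by positivity), ← ENNReal.ofReal_mul (by positivity),
        ← ENNReal.ofReal_mul (by positivity)]
    rw [h2] at h1
    apply h1.congr'
    filter_upwards [eventually_mem_nhdsWithin] with t ht
    have ht : (0:ℝ) < t := ht
    have hset : {x | x * q.2 ≤ t * (q.1.1 * q.1.2)} = Iic (t * (q.1.1 * q.1.2 / q.2)) := by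
      ext x; simp only [mem_setOf_eq, mem_Iic]
      rw [show t * (q.1.1 * q.1.2 / q.2) = t * (q.1.1 * q.1.2) / q.2 by ring, le_div_iff₀ hy]
    simp only [Function.comp_apply]
    rw [hF]; simp only
    rw [hset, ENNReal.ofReal_mul (Real.rpow_nonneg ht.le _),
      ENNReal.ofReal_toReal (measure_ne_top _ _)]
  -- apply dominated convergence
  have hDCT := tendsto_lintegral_filter_of_dominated_convergence bound
    (Eventually.of_forall hFmeas) h_bound hboundne h_lim
  -- convert to the statement
  have hfin : ∀ t : ℝ, ∫⁻ q, F t q ∂ρ = ENNReal.ofReal (t ^ (-k₁)) *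
      bigμ {p : (ℝ × ℝ) × ℝ × ℝ | p.1.1 * p.1.2 ≤ t * (p.2.1 * p.2.2)} := by
    intro t
    rw [hF]; simp only
    rw [lintegral_const_mul _ (hInner t), ← key t]
  have htoReal := (ENNReal.tendsto_toReal hboundne).comp hDCT
  have hval : (∫⁻ q, bound q ∂ρ).toReal =
      Real.Gamma (m₁ - k₁) * Real.Gamma (k₂ + k₁) * Real.Gamma (m₂ + k₁) /
        (k₁ * Real.Gamma k₁ * Real.Gamma m₁ * Real.Gamma k₂ * Real.Gamma m₂) := by
    rw [hboundint]
    have g1 : (0:ℝ) ≤ Real.Gamma (k₂ + k₁) / Real.Gamma k₂ :=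
      div_nonneg (Real.Gamma_pos_of_pos (by linarith)).le (Real.Gamma_pos_of_pos hk₂).le
    have g2 : (0:ℝ) ≤ Real.Gamma (m₂ + k₁) / Real.Gamma m₂ :=
      div_nonneg (Real.Gamma_pos_of_pos (by linarith)).le (Real.Gamma_pos_of_pos hm₂).le
    have g3 : (0:ℝ) ≤ Real.Gamma (m₁ + -k₁) / Real.Gamma m₁ :=
      div_nonneg (Real.Gamma_pos_of_pos (by linarith)).le (Real.Gamma_pos_of_pos hm₁).le
    have g4 : (0:ℝ) ≤ 1 / (k₁ * Real.Gamma k₁) := by positivity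
    rw [ENNReal.toReal_mul, ENNReal.toReal_mul, ENNReal.toReal_mul,
      ENNReal.toReal_ofReal g1, ENNReal.toReal_ofReal g2,
      ENNReal.toReal_ofReal g3, ENNReal.toReal_ofReal g4]
    have e1 : m₁ + -k₁ = m₁ - k₁ := by ring
    rw [e1]
    have h2 : Real.Gamma k₂ ≠ 0 := (Real.Gamma_pos_of_pos hk₂).ne'
    have h3 : Real.Gamma m₂ ≠ 0 := (Real.Gamma_pos_of_pos hm₂).ne'
    have h4 : Real.Gamma m₁ ≠ 0 := (Real.Gamma_pos_of_pos hm₁).ne'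
    have h5 : Real.Gamma k₁ ≠ 0 := hGk₁.ne'
    field_simp
  rw [hval] at htoReal
  apply htoReal.congr'
  filter_upwards [eventually_mem_nhdsWithin] with t ht
  have ht : (0:ℝ) < t := ht
  simp only [Function.comp_apply]
  rw [hfin t, ENNReal.toReal_mul, ENNReal.toReal_ofReal (Real.rpow_nonneg ht.le _)]


end GammaAux

open GammaAux


theorem stmt_0 {Ω : Type*} [MeasureSpace Ω] [IsProbabilityMeasure (ℙ : Measure Ω)]
    (k₁ k₂ m₁ m₂ : ℝ) (hk₁ : 0 < k₁) (hk₂ : 0 < k₂) (hm₁ : 0 < m₁) (hm₂ : 0 < m₂)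
    (hne : k₁ ≠ m₁) (α₁ : ℝ) (hα₁ : α₁ = min k₁ m₁)
    (X₁ Y₁ X₂ Y₂ : Ω → ℝ)
    (hX₁m : Measurable X₁) (hY₁m : Measurable Y₁) (hX₂m : Measurable X₂) (hY₂m : Measurable Y₂)
    (hX₁ : Measure.map X₁ ℙ = gammaMeasure k₁ 1)
    (hY₁ : Measure.map Y₁ ℙ = gammaMeasure m₁ 1)
    (hX₂ : Measure.map X₂ ℙ = gammaMeasure k₂ 1)
    (hY₂ : Measure.map Y₂ ℙ = gammaMeasure m₂ 1)
    (hindep : iIndepFun ![X₁, Y₁, X₂, Y₂] ℙ) :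
    Tendsto
      (fun t : ℝ => t ^ (-α₁) * (ℙ {ω | X₁ ω * Y₁ ω ≤ t * (X₂ ω * Y₂ ω)}).toReal)
      (nhdsWithin 0 (Set.Ioi 0))
      (nhds (Real.Gamma |k₁ - m₁| * Real.Gamma (k₂ + α₁) * Real.Gamma (m₂ + α₁) /
        (α₁ * Real.Gamma k₁ * Real.Gamma m₁ * Real.Gamma k₂ * Real.Gamma m₂))) := by
  subst hα₁
  have hmeas : ∀ i, Measurable (![X₁, Y₁, X₂, Y₂] i) := by
    intro i; fin_cases i <;> assumption
  have hSt : ∀ t : ℝ, MeasurableSet {p : (ℝ × ℝ) × ℝ × ℝ | p.1.1 * p.1.2 ≤ t * (p.2.1 * p.2.2)} :=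
    fun t => measurableSet_le (by fun_prop) (by fun_prop)
  have h12 : IndepFun X₁ Y₁ ℙ := hindep.indepFun (show (0 : Fin 4) ≠ 1 by decide)
  have h34 : IndepFun X₂ Y₂ ℙ := hindep.indepFun (show (2 : Fin 4) ≠ 3 by decide)
  have hW : Measure.map (fun ω => (X₂ ω, Y₂ ω)) ℙ = (gammaMeasure k₂ 1).prod (gammaMeasure m₂ 1) := by
    rw [← hX₂, ← hY₂]
    exact (indepFun_iff_map_prod_eq_prod_map_map hX₂m.aemeasurable hY₂m.aemeasurable).mp h34
  rcases lt_or_gt_of_ne hne with h | h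
  · -- k₁ < m₁
    have hZ : Measure.map (fun ω => (X₁ ω, Y₁ ω)) ℙ
        = (gammaMeasure k₁ 1).prod (gammaMeasure m₁ 1) := by
      rw [← hX₁, ← hY₁]
      exact (indepFun_iff_map_prod_eq_prod_map_map hX₁m.aemeasurable hY₁m.aemeasurable).mp h12
    have hpair : IndepFun (fun ω => (X₁ ω, Y₁ ω)) (fun ω => (X₂ ω, Y₂ ω)) ℙ :=
      hindep.indepFun_prodMk_prodMk hmeas 0 1 2 3 (by decide) (by decide) (by decide) (by decide)
    have hjoint : Measure.map (fun ω => ((X₁ ω, Y₁ ω), (X₂ ω, Y₂ ω))) ℙ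
        = ((gammaMeasure k₁ 1).prod (gammaMeasure m₁ 1)).prod
            ((gammaMeasure k₂ 1).prod (gammaMeasure m₂ 1)) := by
      rw [← hZ, ← hW]
      exact (indepFun_iff_map_prod_eq_prod_map_map
        ((hX₁m.prodMk hY₁m)).aemeasurable ((hX₂m.prodMk hY₂m)).aemeasurable).mp hpair
    have hP : ∀ t : ℝ, ℙ {ω | X₁ ω * Y₁ ω ≤ t * (X₂ ω * Y₂ ω)}
        = (((gammaMeasure k₁ 1).prod (gammaMeasure m₁ 1)).prod
            ((gammaMeasure k₂ 1).prod (gammaMeasure m₂ 1)))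
          {p : (ℝ × ℝ) × ℝ × ℝ | p.1.1 * p.1.2 ≤ t * (p.2.1 * p.2.2)} := by
      intro t
      rw [← hjoint, Measure.map_apply (by fun_prop) (hSt t)]
      rfl
    have hmin : min k₁ m₁ = k₁ := min_eq_left h.le
    have habs : |k₁ - m₁| = m₁ - k₁ := by rw [abs_of_neg (by linarith)]; ring
    rw [hmin, habs]
    refine Tendsto.congr (fun t => ?_) (gamma_aux k₁ k₂ m₁ m₂ hk₁ hk₂ hm₁ hm₂ h)
    rw [hP t]
  · -- m₁ < k₁
    have hZ : Measure.map (fun ω => (Y₁ ω, X₁ ω)) ℙ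
        = (gammaMeasure m₁ 1).prod (gammaMeasure k₁ 1) := by
      rw [← hX₁, ← hY₁]
      exact (indepFun_iff_map_prod_eq_prod_map_map hY₁m.aemeasurable hX₁m.aemeasurable).mp h12.symm
    have hpair : IndepFun (fun ω => (Y₁ ω, X₁ ω)) (fun ω => (X₂ ω, Y₂ ω)) ℙ :=
      hindep.indepFun_prodMk_prodMk hmeas 1 0 2 3 (by decide) (by decide) (by decide) (by decide)
    have hjoint : Measure.map (fun ω => ((Y₁ ω, X₁ ω), (X₂ ω, Y₂ ω))) ℙ
        = ((gammaMeasure m₁ 1).prod (gammaMeasure k₁ 1)).prod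
            ((gammaMeasure k₂ 1).prod (gammaMeasure m₂ 1)) := by
      rw [← hZ, ← hW]
      exact (indepFun_iff_map_prod_eq_prod_map_map
        ((hY₁m.prodMk hX₁m)).aemeasurable ((hX₂m.prodMk hY₂m)).aemeasurable).mp hpair
    have hP : ∀ t : ℝ, ℙ {ω | X₁ ω * Y₁ ω ≤ t * (X₂ ω * Y₂ ω)}
        = (((gammaMeasure m₁ 1).prod (gammaMeasure k₁ 1)).prod
            ((gammaMeasure k₂ 1).prod (gammaMeasure m₂ 1)))
          {p : (ℝ × ℝ) × ℝ × ℝ | p.1.1 * p.1.2 ≤ t * (p.2.1 * p.2.2)} := by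
      intro t
      rw [← hjoint, Measure.map_apply (by fun_prop) (hSt t)]
      have : {ω | X₁ ω * Y₁ ω ≤ t * (X₂ ω * Y₂ ω)}
          = {ω | Y₁ ω * X₁ ω ≤ t * (X₂ ω * Y₂ ω)} := by
        ext ω; simp only [mem_setOf_eq, mul_comm (X₁ ω) (Y₁ ω)]
      rw [this]
      rfl
    have hmin : min k₁ m₁ = m₁ := min_eq_right h.le
    have habs : |k₁ - m₁| = k₁ - m₁ := abs_of_pos (by linarith)
    rw [hmin, habs]
    have hconst : Real.Gamma (k₁ - m₁) * Real.Gamma (k₂ + m₁) * Real.Gamma (m₂ + m₁) /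
          (m₁ * Real.Gamma m₁ * Real.Gamma k₁ * Real.Gamma k₂ * Real.Gamma m₂)
        = Real.Gamma (k₁ - m₁) * Real.Gamma (k₂ + m₁) * Real.Gamma (m₂ + m₁) /
          (m₁ * Real.Gamma k₁ * Real.Gamma m₁ * Real.Gamma k₂ * Real.Gamma m₂) := by
      ring_nf
    have haux := gamma_aux m₁ k₂ k₁ m₂ hm₁ hk₂ hk₁ hm₂ h
    rw [hconst] at haux
    refine Tendsto.congr (fun t => ?_) haux
    rw [hP t]
end

section
/- Let ρ ∈ [0, 1), k1, k2, m1, m2 > 0 with k1 ≠ m1, and γ̄2 > 0; set α1 = min(k1, m1). For every γ̄1 > 0, let X1, Y1, X2, Y2 be independent random variables with Xℓ ~ Gamma(kℓ, 1) and Yℓ ~ Gamma(mℓ, 1), and define γℓ = ((1 − ρ) γ̄ℓ/(kℓ mℓ)) · Xℓ · Yℓ for ℓ = 1, 2. Then lim_{γ̄1 → ∞} γ̄1^{α1} · (1 − ρ)^{k2} · P(γ1 ≤ γ2) = (1 − ρ)^{k2} · Γ(|k1 − m1|) · Γ(k2 + α1) · Γ(m2 + α1) / (α1 · Γ(m1)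 · Γ(m2) · Γ(k1) · Γ(k2)) · (m1 k1 γ̄2/(m2 k2))^{α1}. -/
open MeasureTheory ProbabilityTheory Filter Real Set

namespace SecrecyAux


lemma gamma_Iic_zero (a : ℝ) : gammaMeasure a 1 (Iic 0) = 0 := by
  rw [gammaMeasure, withDensity_apply _ measurableSet_Iic]
  calc ∫⁻ x in Iic (0:ℝ), gammaPDF a 1 x
      = ∫⁻ _ in Iic (0:ℝ), 0 := by
        apply lintegral_congr_ae
        rw [EventuallyEq, ae_restrict_iff' measurableSet_Iic]
        have h0 : (volume : Measure ℝ) {0} = 0 := by simp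
        filter_upwards [measure_eq_zero_iff_ae_notMem.mp h0] with x hx hx'
        have : x < 0 := lt_of_le_of_ne hx' (by simpa using hx)
        exact gammaPDF_of_neg this
    _ = 0 := lintegral_zero

lemma gamma_ae_pos {a : ℝ} : ∀ᵐ x ∂(gammaMeasure a 1), x ∈ Ioi (0:ℝ) := by
  rw [ae_iff]
  have : {x : ℝ | ¬ x ∈ Ioi (0:ℝ)} = Iic 0 := by ext x; simp
  rw [this]
  exact gamma_Iic_zero a



lemma moment_lintegral {a p : ℝ} (ha : 0 < a) (hap : 0 < a + p) :
    ∫⁻ x in Ioi 0, ENNReal.ofReal (x ^ p) ∂(gammaMeasure a 1)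
      = ENNReal.ofReal (Gamma (a + p) / Gamma a) := by
  have hΓ := Real.Gamma_pos_of_pos ha
  have hmg : Measurable fun x : ℝ => ENNReal.ofReal (x ^ p) := by fun_prop
  have hpdf : Measurable (gammaPDF a 1) := (measurable_gammaPDFReal a 1).ennreal_ofReal
  rw [gammaMeasure, restrict_withDensity measurableSet_Ioi,
    lintegral_withDensity_eq_lintegral_mul _ hpdf hmg]
  have hcong : ∫⁻ x in Ioi (0:ℝ), (gammaPDF a 1 * fun x => ENNReal.ofReal (x ^ p)) x
      = ∫⁻ x in Ioi (0:ℝ), ENNReal.ofReal (exp (-x) * x ^ (a + p - 1) / Gamma a) := by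
    apply setLIntegral_congr_fun measurableSet_Ioi
    intro x hx
    have hx0 : (0:ℝ) < x := hx
    simp only [Pi.mul_apply]
    rw [gammaPDF_of_nonneg hx.le, ← ENNReal.ofReal_mul (by positivity)]
    congr 1
    rw [Real.one_rpow, show a + p - 1 = (a - 1) + p by ring, Real.rpow_add hx]
    ring
  rw [hcong, ← MeasureTheory.ofReal_integral_eq_lintegral_ofReal]
  · rw [integral_div, ← Real.Gamma_eq_integral hap]
  · exact (Real.GammaIntegral_convergent hap).div_const _
  · filter_upwards [self_mem_ae_restrict measurableSet_Ioi] with x hx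
    have : (0:ℝ) < x := hx
    positivity

lemma moment_integrableOn {a p : ℝ} (ha : 0 < a) (hap : 0 < a + p) :
    IntegrableOn (fun x : ℝ => x ^ p) (Ioi 0) (gammaMeasure a 1) := by
  have hmeas : Measurable fun x : ℝ => x ^ p := by fun_prop
  refine ⟨hmeas.aestronglyMeasurable, ?_⟩
  rw [hasFiniteIntegral_iff_ofReal ?nn]
  case nn =>
    filter_upwards [self_mem_ae_restrict measurableSet_Ioi] with x hx
    have : (0:ℝ) < x := hx
    positivity
  rw [moment_lintegral ha hap]
  exact ENNReal.ofReal_lt_top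

lemma moment_integral {a p : ℝ} (ha : 0 < a) (hap : 0 < a + p) :
    ∫ x in Ioi 0, x ^ p ∂(gammaMeasure a 1) = Gamma (a + p) / Gamma a := by
  have hmeas : Measurable fun x : ℝ => x ^ p := by fun_prop
  have hnn : 0 ≤ᵐ[(gammaMeasure a 1).restrict (Ioi 0)] fun x : ℝ => x ^ p := by
    filter_upwards [self_mem_ae_restrict measurableSet_Ioi] with x hx
    have : (0:ℝ) < x := hx
    positivity
  rw [integral_eq_lintegral_of_nonneg_ae hnn hmeas.aestronglyMeasurable.restrict,
    moment_lintegral ha hap, ENNReal.toReal_ofReal]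
  positivity




lemma gamma_Iic_eq {a s : ℝ} (hs : 0 ≤ s) :
    gammaMeasure a 1 (Iic s) = ∫⁻ x in Ioc 0 s, gammaPDF a 1 x := by
  have h0 : gammaMeasure a 1 (Iic 0) = 0 := gamma_Iic_zero a
  rw [gammaMeasure, withDensity_apply _ measurableSet_Iic] at h0 ⊢
  rw [← Iic_union_Ioc_eq_Iic hs, lintegral_union measurableSet_Ioc (Iic_disjoint_Ioc le_rfl),
    h0, zero_add]

lemma rpow_integrableOn {a : ℝ} (s : ℝ) (ha : 0 < a) :
    IntegrableOn (fun x : ℝ => x ^ (a - 1)) (Ioc 0 s) :=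
  (intervalIntegral.intervalIntegrable_rpow' (r := a - 1) (by linarith) (a := 0) (b := s)).1

lemma rpow_int_eq {a s : ℝ} (ha : 0 < a) (hs : 0 ≤ s) :
    ∫ x in Ioc 0 s, x ^ (a - 1) = s ^ a / a := by
  rw [← intervalIntegral.integral_of_le hs, integral_rpow (Or.inl (by linarith))]
  rw [show a - 1 + 1 = a by ring, Real.zero_rpow ha.ne', sub_zero]

lemma pdf_eq_on {a x : ℝ} (hx : 0 ≤ x) :
    gammaPDF a 1 x = ENNReal.ofReal (x ^ (a - 1) / Gamma a * rexp (-x)) := by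
  rw [gammaPDF_of_nonneg hx]
  congr 1
  rw [Real.one_rpow, one_mul]
  ring_nf

lemma cdf_upper {a s : ℝ} (ha : 0 < a) (hs : 0 ≤ s) :
    gammaMeasure a 1 (Iic s) ≤ ENNReal.ofReal (s ^ a / (a * Gamma a)) := by
  have hΓ := Real.Gamma_pos_of_pos ha
  rw [gamma_Iic_eq hs]
  calc ∫⁻ x in Ioc 0 s, gammaPDF a 1 x
      ≤ ∫⁻ x in Ioc 0 s, ENNReal.ofReal (x ^ (a - 1) / Gamma a) := by
        refine setLIntegral_mono (by fun_prop) (fun x hx => ?_)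
        have hx0 : (0:ℝ) < x := hx.1
        rw [pdf_eq_on hx0.le]
        apply ENNReal.ofReal_le_ofReal
        have he : rexp (-x) ≤ 1 := Real.exp_le_one_iff.mpr (by linarith)
        have h1 : (0:ℝ) ≤ x ^ (a - 1) / Gamma a := by positivity
        nlinarith
    _ = ENNReal.ofReal (∫ x in Ioc 0 s, x ^ (a - 1) / Gamma a) := by
        rw [MeasureTheory.ofReal_integral_eq_lintegral_ofReal
          ((rpow_integrableOn s ha).div_const _)]
        filter_upwards [self_mem_ae_restrict measurableSet_Ioc] with x hx
        have hx0 : (0:ℝ) < x := hx.1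
        positivity
    _ = ENNReal.ofReal (s ^ a / (a * Gamma a)) := by
        rw [integral_div, rpow_int_eq ha hs]
        congr 1
        field_simp

lemma cdf_lower {a s : ℝ} (ha : 0 < a) (hs : 0 ≤ s) :
    ENNReal.ofReal (rexp (-s) * (s ^ a / (a * Gamma a))) ≤ gammaMeasure a 1 (Iic s) := by
  have hΓ := Real.Gamma_pos_of_pos ha
  rw [gamma_Iic_eq hs]
  calc ENNReal.ofReal (rexp (-s) * (s ^ a / (a * Gamma a)))
      = ∫⁻ x in Ioc 0 s, ENNReal.ofReal (x ^ (a - 1) / Gamma a * rexp (-s)) := by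
        rw [← MeasureTheory.ofReal_integral_eq_lintegral_ofReal
          (((rpow_integrableOn s ha).div_const _).mul_const _) ?nn]
        case nn =>
          filter_upwards [self_mem_ae_restrict measurableSet_Ioc] with x hx
          have hx0 : (0:ℝ) < x := hx.1
          positivity
        rw [MeasureTheory.integral_mul_const, integral_div, rpow_int_eq ha hs]
        congr 1
        field_simp
    _ ≤ ∫⁻ x in Ioc 0 s, gammaPDF a 1 x := by
        refine setLIntegral_mono ((measurable_gammaPDFReal a 1).ennreal_ofReal) (fun x hx => ?_)
        have hx0 : (0:ℝ) < x := hx.1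
        rw [pdf_eq_on hx0.le]
        apply ENNReal.ofReal_le_ofReal
        have he : rexp (-s) ≤ rexp (-x) := Real.exp_le_exp.mpr (by linarith [hx.2])
        have h1 : (0:ℝ) ≤ x ^ (a - 1) / Gamma a := by positivity
        nlinarith




section ProdF

variable {k m : ℝ}

lemma set_eq {x s : ℝ} (hx : 0 < x) : {y : ℝ | x * y ≤ s} = Iic (s / x) := by
  ext y
  rw [mem_setOf_eq, mem_Iic, le_div_iff₀ hx, mul_comm]

lemma prod_repr (hk : 0 < k) (hm : 0 < m) (s : ℝ) :
    ((gammaMeasure k 1).prod (gammaMeasure m 1)) {w : ℝ × ℝ | w.1 * w.2 ≤ s}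
      = ∫⁻ x, gammaMeasure m 1 {y : ℝ | x * y ≤ s} ∂(gammaMeasure k 1) := by
  have : IsProbabilityMeasure (gammaMeasure m 1) := isProbabilityMeasure_gammaMeasure hm one_pos
  rw [Measure.prod_apply (measurableSet_le (by fun_prop) measurable_const)]
  rfl

lemma prodF_zero (hk : 0 < k) (hm : 0 < m) {s : ℝ} (hs : s ≤ 0) :
    ((gammaMeasure k 1).prod (gammaMeasure m 1)) {w : ℝ × ℝ | w.1 * w.2 ≤ s} = 0 := by
  rw [prod_repr hk hm]
  have h : ∀ᵐ x ∂(gammaMeasure k 1), gammaMeasure m 1 {y : ℝ | x * y ≤ s} = 0 := by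
    filter_upwards [gamma_ae_pos] with x hx
    refine measure_mono_null ?_ (gamma_Iic_zero m)
    intro y hy
    have hxy : x * y ≤ s := hy
    have h2 : x * y ≤ x * 0 := by simpa using hxy.trans hs
    exact mem_Iic.mpr (le_of_mul_le_mul_left h2 hx)
  rw [lintegral_congr_ae h, lintegral_zero]

lemma prodF_upper (hk : 0 < k) (hm : 0 < m) (hmk : m < k) {s : ℝ} (hs : 0 ≤ s) :
    ((gammaMeasure k 1).prod (gammaMeasure m 1)) {w : ℝ × ℝ | w.1 * w.2 ≤ s}
      ≤ ENNReal.ofReal (Gamma (k - m) / (m * Gamma m * Gamma k) * s ^ m) := by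
  have hΓm := Real.Gamma_pos_of_pos hm
  have hΓk := Real.Gamma_pos_of_pos hk
  have hΓkm := Real.Gamma_pos_of_pos (by linarith : (0:ℝ) < k - m)
  rw [prod_repr hk hm]
  calc ∫⁻ x, gammaMeasure m 1 {y : ℝ | x * y ≤ s} ∂(gammaMeasure k 1)
      ≤ ∫⁻ x, (Ioi (0:ℝ)).indicator
          (fun x => ENNReal.ofReal (s ^ m / (m * Gamma m)) * ENNReal.ofReal (x ^ (-m))) x
          ∂(gammaMeasure k 1) := by
        refine lintegral_mono_ae ?_
        filter_upwards [gamma_ae_pos] with x hx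
        have hx0 : (0:ℝ) < x := hx
        rw [indicator_of_mem hx, set_eq hx0, ← ENNReal.ofReal_mul (by positivity)]
        refine (cdf_upper hm (by positivity)).trans (le_of_eq ?_)
        congr 1
        rw [Real.div_rpow hs hx0.le, Real.rpow_neg hx0.le]
        ring
    _ = ENNReal.ofReal (s ^ m / (m * Gamma m))
          * ∫⁻ x in Ioi (0:ℝ), ENNReal.ofReal (x ^ (-m)) ∂(gammaMeasure k 1) := by
        rw [lintegral_indicator measurableSet_Ioi, lintegral_const_mul _ (by fun_prop)]
    _ = ENNReal.ofReal (s ^ m / (m * Gamma m)) * ENNReal.ofReal (Gamma (k - m) / Gamma k) := by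
        rw [moment_lintegral hk (by linarith : 0 < k + -m), show k + -m = k - m by ring]
    _ = ENNReal.ofReal (Gamma (k - m) / (m * Gamma m * Gamma k) * s ^ m) := by
        rw [← ENNReal.ofReal_mul (by positivity)]
        congr 1
        field_simp

lemma K_tendsto (hk : 0 < k) (hm : 0 < m) (hmk : m < k) :
    Tendsto (fun s : ℝ => ∫ x in Ioi (0:ℝ), rexp (-(s / x)) * x ^ (-m) ∂(gammaMeasure k 1))
      (nhdsWithin 0 (Ioi 0)) (nhds (Gamma (k - m) / Gamma k)) := by
  have hint : IntegrableOn (fun x : ℝ => x ^ (-m)) (Ioi 0) (gammaMeasure k 1) :=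
    moment_integrableOn hk (by linarith : 0 < k + -m)
  have := moment_integral (a := k) (p := -m) hk (by linarith : 0 < k + -m)
  rw [show k + -m = k - m by ring] at this
  rw [← this]
  refine tendsto_integral_filter_of_dominated_convergence (fun x => x ^ (-m)) ?_ ?_ hint ?_
  · filter_upwards with s
    exact (by fun_prop : Measurable fun x : ℝ => rexp (-(s / x)) * x ^ (-m)).aestronglyMeasurable
  · filter_upwards [self_mem_nhdsWithin] with s hs
    filter_upwards [self_mem_ae_restrict measurableSet_Ioi] with x hx
    have hx0 : (0:ℝ) < x := hx
    have hs0 : (0:ℝ) < s := hs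
    rw [Real.norm_eq_abs, abs_of_nonneg (by positivity)]
    have he : rexp (-(s / x)) ≤ 1 := Real.exp_le_one_iff.mpr (neg_nonpos.mpr (div_pos hs0 hx0).le)
    exact mul_le_of_le_one_left (by positivity) he
  · filter_upwards [self_mem_ae_restrict measurableSet_Ioi] with x hx
    have hx0 : (0:ℝ) < x := hx
    have hcont : Tendsto (fun s : ℝ => rexp (-(s / x)) * x ^ (-m)) (nhds 0)
        (nhds (rexp (-(0 / x)) * x ^ (-m))) := by
      exact (((continuous_id.div_const x).neg.rexp).mul continuous_const).tendsto 0
    have h0 : rexp (-(0 / x)) * x ^ (-m) = x ^ (-m) := by simp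
    rw [h0] at hcont
    exact hcont.mono_left nhdsWithin_le_nhds

lemma K_integrable (hk : 0 < k) (hm : 0 < m) (hmk : m < k) {s : ℝ} (hs : 0 < s) :
    Integrable (fun x : ℝ => rexp (-(s / x)) * x ^ (-m))
      ((gammaMeasure k 1).restrict (Ioi 0)) := by
  refine (moment_integrableOn hk (by linarith : 0 < k + -m)).mono'
    (by fun_prop : Measurable fun x : ℝ => rexp (-(s / x)) * x ^ (-m)).aestronglyMeasurable ?_
  filter_upwards [self_mem_ae_restrict measurableSet_Ioi] with x hx
  have hx0 : (0:ℝ) < x := hx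
  rw [Real.norm_eq_abs, abs_of_nonneg (by positivity)]
  exact mul_le_of_le_one_left (by positivity)
    (Real.exp_le_one_iff.mpr (neg_nonpos.mpr (div_pos hs hx0).le))

lemma K_nonneg (hk : 0 < k) {s : ℝ} :
    0 ≤ ∫ x in Ioi (0:ℝ), rexp (-(s / x)) * x ^ (-m) ∂(gammaMeasure k 1) := by
  refine setIntegral_nonneg measurableSet_Ioi fun x hx => ?_
  have hx0 : (0:ℝ) < x := hx
  positivity

lemma prodF_lower (hk : 0 < k) (hm : 0 < m) (hmk : m < k) {s : ℝ} (hs : 0 < s) :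
    ENNReal.ofReal (s ^ m / (m * Gamma m)
        * ∫ x in Ioi (0:ℝ), rexp (-(s / x)) * x ^ (-m) ∂(gammaMeasure k 1))
      ≤ ((gammaMeasure k 1).prod (gammaMeasure m 1)) {w : ℝ × ℝ | w.1 * w.2 ≤ s} := by
  have hΓm := Real.Gamma_pos_of_pos hm
  rw [prod_repr hk hm]
  calc ENNReal.ofReal (s ^ m / (m * Gamma m)
        * ∫ x in Ioi (0:ℝ), rexp (-(s / x)) * x ^ (-m) ∂(gammaMeasure k 1))
      = ∫⁻ x in Ioi (0:ℝ),
          ENNReal.ofReal (s ^ m / (m * Gamma m) * (rexp (-(s / x)) * x ^ (-m)))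
          ∂(gammaMeasure k 1) := by
        rw [← integral_const_mul, MeasureTheory.ofReal_integral_eq_lintegral_ofReal
          ((K_integrable hk hm hmk hs).const_mul _) ?nn]
        case nn =>
          filter_upwards [self_mem_ae_restrict measurableSet_Ioi] with x hx
          have hx0 : (0:ℝ) < x := hx
          positivity
    _ = ∫⁻ x, (Ioi (0:ℝ)).indicator
          (fun x => ENNReal.ofReal (s ^ m / (m * Gamma m) * (rexp (-(s / x)) * x ^ (-m)))) x
          ∂(gammaMeasure k 1) := by
        rw [lintegral_indicator measurableSet_Ioi]
    _ ≤ ∫⁻ x, gammaMeasure m 1 {y : ℝ | x * y ≤ s} ∂(gammaMeasure k 1) := by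
        refine lintegral_mono_ae ?_
        filter_upwards [gamma_ae_pos] with x hx
        have hx0 : (0:ℝ) < x := hx
        rw [indicator_of_mem hx, set_eq hx0]
        refine le_trans (le_of_eq ?_) (cdf_lower hm (by positivity))
        congr 1
        rw [Real.div_rpow hs.le hx0.le, Real.rpow_neg hx0.le]
        ring

lemma prodF_tendsto (hk : 0 < k) (hm : 0 < m) (hmk : m < k) :
    Tendsto (fun s : ℝ =>
        (((gammaMeasure k 1).prod (gammaMeasure m 1)) {w : ℝ × ℝ | w.1 * w.2 ≤ s}).toReal / s ^ m)
      (nhdsWithin 0 (Ioi 0)) (nhds (Gamma (k - m) / (m * Gamma m * Gamma k))) := by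
  have hΓm := Real.Gamma_pos_of_pos hm
  have hΓk := Real.Gamma_pos_of_pos hk
  have : IsProbabilityMeasure (gammaMeasure k 1) := isProbabilityMeasure_gammaMeasure hk one_pos
  have : IsProbabilityMeasure (gammaMeasure m 1) := isProbabilityMeasure_gammaMeasure hm one_pos
  have hfin : ∀ s : ℝ,
      ((gammaMeasure k 1).prod (gammaMeasure m 1)) {w : ℝ × ℝ | w.1 * w.2 ≤ s} ≠ ⊤ :=
    fun s => measure_ne_top _ _
  have hgl : Tendsto (fun s : ℝ =>
      (∫ x in Ioi (0:ℝ), rexp (-(s / x)) * x ^ (-m) ∂(gammaMeasure k 1)) / (m * Gamma m))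
      (nhdsWithin 0 (Ioi 0)) (nhds (Gamma (k - m) / (m * Gamma m * Gamma k))) := by
    have := (K_tendsto hk hm hmk).div_const (m * Gamma m)
    convert this using 2
    rw [div_div, mul_comm (Gamma k)]
  refine tendsto_of_tendsto_of_tendsto_of_le_of_le' hgl tendsto_const_nhds ?_ ?_
  · filter_upwards [self_mem_nhdsWithin] with s hs
    have hs0 : (0:ℝ) < s := hs
    have hsm : (0:ℝ) < s ^ m := by positivity
    have h1 := prodF_lower hk hm hmk hs0
    have h2 : s ^ m / (m * Gamma m)
        * ∫ x in Ioi (0:ℝ), rexp (-(s / x)) * x ^ (-m) ∂(gammaMeasure k 1)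
        ≤ (((gammaMeasure k 1).prod (gammaMeasure m 1)) {w : ℝ × ℝ | w.1 * w.2 ≤ s}).toReal := by
      have := ENNReal.toReal_mono (hfin s) h1
      rwa [ENNReal.toReal_ofReal
        (mul_nonneg (by positivity) (K_nonneg (m := m) hk))] at this
    calc (∫ x in Ioi (0:ℝ), rexp (-(s / x)) * x ^ (-m) ∂(gammaMeasure k 1)) / (m * Gamma m)
        = (s ^ m / (m * Gamma m)
            * ∫ x in Ioi (0:ℝ), rexp (-(s / x)) * x ^ (-m) ∂(gammaMeasure k 1)) / s ^ m := by
          field_simp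
      _ ≤ (((gammaMeasure k 1).prod (gammaMeasure m 1))
            {w : ℝ × ℝ | w.1 * w.2 ≤ s}).toReal / s ^ m := by gcongr
  · filter_upwards [self_mem_nhdsWithin] with s hs
    have hs0 : (0:ℝ) < s := hs
    have hsm : (0:ℝ) < s ^ m := by positivity
    have h1 := prodF_upper hk hm hmk hs0.le
    have hC : (0:ℝ) ≤ Gamma (k - m) / (m * Gamma m * Gamma k) * s ^ m := by
      have := Real.Gamma_pos_of_pos (by linarith : (0:ℝ) < k - m)
      positivity
    have h2 : (((gammaMeasure k 1).prod (gammaMeasure m 1))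
        {w : ℝ × ℝ | w.1 * w.2 ≤ s}).toReal
        ≤ Gamma (k - m) / (m * Gamma m * Gamma k) * s ^ m := by
      have := ENNReal.toReal_mono ENNReal.ofReal_ne_top h1
      rwa [ENNReal.toReal_ofReal hC] at this
    rw [div_le_iff₀ hsm]
    linarith

end ProdF



lemma gamma_restrict_Ioi (a : ℝ) :
    (gammaMeasure a 1).restrict (Ioi 0) = gammaMeasure a 1 :=
  Measure.restrict_eq_self_of_ae_mem gamma_ae_pos

lemma max_rpow_integrable {a q : ℝ} (ha : 0 < a) (hq : 0 < q) :
    Integrable (fun x : ℝ => max x 0 ^ q) (gammaMeasure a 1) := by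
  rw [← gamma_restrict_Ioi a]
  refine (moment_integrableOn ha (by linarith)).congr ?_
  filter_upwards [self_mem_ae_restrict measurableSet_Ioi] with x hx
  have hx0 : (0:ℝ) < x := hx
  rw [max_eq_left hx0.le]

lemma max_rpow_integral {a q : ℝ} (ha : 0 < a) (hq : 0 < q) :
    ∫ x, max x 0 ^ q ∂(gammaMeasure a 1) = Gamma (a + q) / Gamma a := by
  rw [← moment_integral ha (by linarith : 0 < a + q)]
  conv_lhs => rw [← gamma_restrict_Ioi a]
  refine integral_congr_ae ?_
  filter_upwards [self_mem_ae_restrict measurableSet_Ioi] with x hx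
  have hx0 : (0:ℝ) < x := hx
  rw [max_eq_left hx0.le]

lemma prod_ae_pos {a b : ℝ} (ha : 0 < a) (hb : 0 < b) :
    ∀ᵐ v ∂((gammaMeasure a 1).prod (gammaMeasure b 1)), 0 < v.1 ∧ 0 < v.2 := by
  have : IsProbabilityMeasure (gammaMeasure a 1) := isProbabilityMeasure_gammaMeasure ha one_pos
  have : IsProbabilityMeasure (gammaMeasure b 1) := isProbabilityMeasure_gammaMeasure hb one_pos
  have h1 : ((gammaMeasure a 1).prod (gammaMeasure b 1)) ((Iic 0) ×ˢ (univ : Set ℝ)) = 0 := by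
    rw [Measure.prod_prod]
    rw [gamma_Iic_zero a, zero_mul]
  have h2 : ((gammaMeasure a 1).prod (gammaMeasure b 1)) ((univ : Set ℝ) ×ˢ (Iic 0)) = 0 := by
    rw [Measure.prod_prod]
    rw [gamma_Iic_zero b, mul_zero]
  rw [ae_iff]
  refine measure_mono_null ?_ (measure_union_null h1 h2)
  intro v hv
  simp only [mem_setOf_eq, not_and_or, not_lt] at hv
  rcases hv with hv | hv
  · exact Or.inl ⟨hv, trivial⟩
  · exact Or.inr ⟨trivial, hv⟩




lemma master {k₁ k₂ m₁ m₂ α₁ c : ℝ} (hk₁ : 0 < k₁) (hk₂ : 0 < k₂) (hm₁ : 0 < m₁)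
    (hm₂ : 0 < m₂) (hne : k₁ ≠ m₁) (hα₁ : α₁ = min k₁ m₁) (hc : 0 < c) :
    Tendsto (fun g : ℝ => g ^ α₁ *
        (∫⁻ v, ((gammaMeasure k₁ 1).prod (gammaMeasure m₁ 1))
            {w : ℝ × ℝ | w.1 * w.2 ≤ c * (v.1 * v.2) / g}
          ∂((gammaMeasure k₂ 1).prod (gammaMeasure m₂ 1))).toReal)
      atTop
      (nhds (Gamma |k₁ - m₁| / (α₁ * Gamma m₁ * Gamma k₁) * c ^ α₁ *
        (Gamma (k₂ + α₁) / Gamma k₂) * (Gamma (m₂ + α₁) / Gamma m₂))) := by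
  have : IsProbabilityMeasure (gammaMeasure k₁ 1) := isProbabilityMeasure_gammaMeasure hk₁ one_pos
  have : IsProbabilityMeasure (gammaMeasure m₁ 1) := isProbabilityMeasure_gammaMeasure hm₁ one_pos
  have : IsProbabilityMeasure (gammaMeasure k₂ 1) := isProbabilityMeasure_gammaMeasure hk₂ one_pos
  have : IsProbabilityMeasure (gammaMeasure m₂ 1) := isProbabilityMeasure_gammaMeasure hm₂ one_pos
  set Fl : ℝ → ENNReal := fun s =>
    ((gammaMeasure k₁ 1).prod (gammaMeasure m₁ 1)) {w : ℝ × ℝ | w.1 * w.2 ≤ s} with hFl_def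
  set C : ℝ := Gamma |k₁ - m₁| / (α₁ * Gamma m₁ * Gamma k₁) with hC_def
  have hα0 : 0 < α₁ := by rw [hα₁]; exact lt_min hk₁ hm₁
  have hΓm₁ := Real.Gamma_pos_of_pos hm₁
  have hΓk₁ := Real.Gamma_pos_of_pos hk₁
  have hΓd := Real.Gamma_pos_of_pos (s := |k₁ - m₁|) (abs_pos.mpr (sub_ne_zero.mpr hne))
  have hC0 : 0 ≤ C := by rw [hC_def]; positivity
  -- properties of Fl
  have hprops : (∀ s : ℝ, 0 ≤ s → Fl s ≤ ENNReal.ofReal (C * s ^ α₁)) ∧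
      Tendsto (fun s => (Fl s).toReal / s ^ α₁) (nhdsWithin 0 (Ioi 0)) (nhds C) := by
    rcases (lt_or_gt_of_ne hne) with hlt | hlt
    · -- k₁ < m₁ : swap
      have hswap : ∀ s : ℝ, Fl s
          = ((gammaMeasure m₁ 1).prod (gammaMeasure k₁ 1)) {w : ℝ × ℝ | w.1 * w.2 ≤ s} := by
        intro s
        have h1 : ((gammaMeasure m₁ 1).prod (gammaMeasure k₁ 1)) {w : ℝ × ℝ | w.1 * w.2 ≤ s}
            = ((gammaMeasure k₁ 1).prod (gammaMeasure m₁ 1)) {w : ℝ × ℝ | w.1 * w.2 ≤ s} := by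
          rw [← Measure.prod_swap, Measure.map_apply measurable_swap
            (show MeasurableSet {w : ℝ × ℝ | w.1 * w.2 ≤ s} from
              measurableSet_le (measurable_fst.mul measurable_snd) measurable_const)]
          congr 1
          ext w
          simp [mul_comm]
        exact h1.symm
      have hCeq : Gamma (m₁ - k₁) / (k₁ * Gamma k₁ * Gamma m₁) = C := by
        rw [hC_def, hα₁, min_eq_left hlt.le, abs_of_neg (by linarith : k₁ - m₁ < 0), neg_sub]
        ring
      have hαe : α₁ = k₁ := by rw [hα₁, min_eq_left hlt.le]
      constructor
      · intro s hs
        rw [hswap s, hαe, ← hCeq]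
        exact prodF_upper hm₁ hk₁ hlt hs
      · have h2 : (fun s : ℝ => (Fl s).toReal / s ^ α₁)
            = fun s : ℝ => (((gammaMeasure m₁ 1).prod (gammaMeasure k₁ 1))
              {w : ℝ × ℝ | w.1 * w.2 ≤ s}).toReal / s ^ k₁ := by
          funext s
          rw [hswap s, hαe]
        rw [h2, ← hCeq]
        exact prodF_tendsto hm₁ hk₁ hlt
    · -- m₁ < k₁
      have hCeq : Gamma (k₁ - m₁) / (m₁ * Gamma m₁ * Gamma k₁) = C := by
        rw [hC_def, hα₁, min_eq_right hlt.le, abs_of_pos (by linarith : 0 < k₁ - m₁)]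
      have hαe : α₁ = m₁ := by rw [hα₁, min_eq_right hlt.le]
      constructor
      · intro s hs
        rw [hαe, ← hCeq]
        exact prodF_upper hk₁ hm₁ hlt hs
      · have h2 : (fun s : ℝ => (Fl s).toReal / s ^ α₁)
            = fun s : ℝ => (((gammaMeasure k₁ 1).prod (gammaMeasure m₁ 1))
              {w : ℝ × ℝ | w.1 * w.2 ≤ s}).toReal / s ^ m₁ := by
          funext s
          rw [hαe]
        rw [h2, ← hCeq]
        exact prodF_tendsto hk₁ hm₁ hlt
  obtain ⟨hFlup, hFlt⟩ := hprops
  have hFlmono : Monotone Fl := fun s t hst => measure_mono (fun w hw => le_trans hw hst)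
  have hFlmeas : Measurable Fl := hFlmono.measurable
  set μ := (gammaMeasure k₂ 1).prod (gammaMeasure m₂ 1) with hμ_def
  set f : ℝ × ℝ → ℝ := fun v => C * c ^ α₁ * (max v.1 0 ^ α₁ * max v.2 0 ^ α₁) with hf_def
  have hint : Integrable f μ :=
    ((max_rpow_integrable hk₂ hα0).mul_prod (max_rpow_integrable hm₂ hα0)).const_mul _
  have hmeasH : ∀ g : ℝ, Measurable fun v : ℝ × ℝ =>
      g ^ α₁ * (Fl (c * (v.1 * v.2) / g)).toReal := by
    intro g
    exact ((hFlmeas.comp (((measurable_fst.mul measurable_snd).const_mul c).div_const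
      g)).ennreal_toReal).const_mul _
  have hDCT : Tendsto (fun g : ℝ => ∫ v, g ^ α₁ * (Fl (c * (v.1 * v.2) / g)).toReal ∂μ)
      atTop (nhds (∫ v, f v ∂μ)) := by
    refine tendsto_integral_filter_of_dominated_convergence f ?_ ?_ hint ?_
    · filter_upwards with g
      exact (hmeasH g).aestronglyMeasurable
    · filter_upwards [eventually_gt_atTop (0:ℝ)] with g hg
      filter_upwards [prod_ae_pos hk₂ hm₂] with v hv
      have hga : (0:ℝ) < g ^ α₁ := Real.rpow_pos_of_pos hg _
      have hs0 : 0 < c * (v.1 * v.2) / g :=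
        div_pos (mul_pos hc (mul_pos hv.1 hv.2)) hg
      rw [Real.norm_eq_abs, abs_of_nonneg (mul_nonneg hga.le ENNReal.toReal_nonneg)]
      have h1 : (Fl (c * (v.1 * v.2) / g)).toReal ≤ C * (c * (v.1 * v.2) / g) ^ α₁ := by
        have h2 := ENNReal.toReal_mono ENNReal.ofReal_ne_top (hFlup _ hs0.le)
        rwa [ENNReal.toReal_ofReal (mul_nonneg hC0 (Real.rpow_nonneg hs0.le _))] at h2
      calc g ^ α₁ * (Fl (c * (v.1 * v.2) / g)).toReal
          ≤ g ^ α₁ * (C * (c * (v.1 * v.2) / g) ^ α₁) :=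
            mul_le_mul_of_nonneg_left h1 hga.le
        _ = f v := by
            simp only [hf_def]
            rw [max_eq_left hv.1.le, max_eq_left hv.2.le,
              Real.div_rpow (mul_nonneg hc.le (mul_nonneg hv.1.le hv.2.le)) hg.le,
              Real.mul_rpow hc.le (mul_nonneg hv.1.le hv.2.le),
              Real.mul_rpow hv.1.le hv.2.le]
            have hga' : g ^ α₁ ≠ 0 := hga.ne'
            field_simp
    · filter_upwards [prod_ae_pos hk₂ hm₂] with v hv
      set r : ℝ := c * (v.1 * v.2) with hr_def
      have hr : 0 < r := mul_pos hc (mul_pos hv.1 hv.2)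
      have ht : Tendsto (fun g : ℝ => r / g) atTop (nhdsWithin 0 (Ioi 0)) := by
        rw [tendsto_nhdsWithin_iff]
        constructor
        · exact Tendsto.div_atTop tendsto_const_nhds tendsto_id
        · filter_upwards [eventually_gt_atTop (0:ℝ)] with g hg
          exact div_pos hr hg
      have h2 := (hFlt.comp ht).const_mul (r ^ α₁)
      have heq : (fun g : ℝ => r ^ α₁ * ((Fl (r / g)).toReal / (r / g) ^ α₁))
          =ᶠ[atTop] fun g : ℝ => g ^ α₁ * (Fl (c * (v.1 * v.2) / g)).toReal := by
        filter_upwards [eventually_gt_atTop (0:ℝ)] with g hg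
        rw [← hr_def, Real.div_rpow hr.le hg.le]
        have hra : (0:ℝ) < r ^ α₁ := Real.rpow_pos_of_pos hr _
        have hga : (0:ℝ) < g ^ α₁ := Real.rpow_pos_of_pos hg _
        field_simp
      have h3 := Tendsto.congr' heq h2
      have hfv : f v = r ^ α₁ * C := by
        simp only [hf_def, hr_def]
        rw [max_eq_left hv.1.le, max_eq_left hv.2.le,
          Real.mul_rpow hc.le (mul_nonneg hv.1.le hv.2.le), Real.mul_rpow hv.1.le hv.2.le]
        ring
      rw [hfv]
      exact h3
  have hval : ∫ v, f v ∂μ = Gamma |k₁ - m₁| / (α₁ * Gamma m₁ * Gamma k₁) * c ^ α₁ *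
      (Gamma (k₂ + α₁) / Gamma k₂) * (Gamma (m₂ + α₁) / Gamma m₂) := by
    simp only [hf_def]
    rw [MeasureTheory.integral_const_mul, hμ_def,
      integral_prod_mul (fun x : ℝ => max x 0 ^ α₁) (fun y : ℝ => max y 0 ^ α₁),
      max_rpow_integral hk₂ hα0, max_rpow_integral hm₂ hα0, hC_def]
    ring
  rw [← hval]
  refine hDCT.congr' ?_
  filter_upwards [eventually_gt_atTop (0:ℝ)] with g hg
  rw [MeasureTheory.integral_const_mul]
  congr 1
  exact integral_toReal ((hFlmeas.comp (((measurable_fst.mul measurable_snd).const_mul c).div_const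
      g)).aemeasurable) (by filter_upwards with v; exact measure_lt_top _ _)


end SecrecyAux

open SecrecyAux in
theorem stmt_1 {Ω : Type*} [MeasureSpace Ω] [IsProbabilityMeasure (ℙ : Measure Ω)]
    (ρ : ℝ) (hρ : ρ ∈ Set.Ico (0:ℝ) 1)
    (k₁ k₂ m₁ m₂ : ℝ) (hk₁ : 0 < k₁) (hk₂ : 0 < k₂) (hm₁ : 0 < m₁) (hm₂ : 0 < m₂)
    (hne : k₁ ≠ m₁) (gbar₂ : ℝ) (hgbar₂ : 0 < gbar₂)
    (α₁ : ℝ) (hα₁ : α₁ = min k₁ m₁)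
    (X₁ Y₁ X₂ Y₂ : ℝ → Ω → ℝ)
    (hmeas : ∀ g : ℝ, 0 < g → Measurable (X₁ g) ∧ Measurable (Y₁ g) ∧
      Measurable (X₂ g) ∧ Measurable (Y₂ g))
    (hX₁ : ∀ g : ℝ, 0 < g → Measure.map (X₁ g) ℙ = gammaMeasure k₁ 1)
    (hY₁ : ∀ g : ℝ, 0 < g → Measure.map (Y₁ g) ℙ = gammaMeasure m₁ 1)
    (hX₂ : ∀ g : ℝ, 0 < g → Measure.map (X₂ g) ℙ = gammaMeasure k₂ 1)
    (hY₂ : ∀ g : ℝ, 0 < g → Measure.map (Y₂ g) ℙ = gammaMeasure m₂ 1)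
    (hindep : ∀ g : ℝ, 0 < g →
      iIndepFun ![X₁ g, Y₁ g, X₂ g, Y₂ g] ℙ)
    (γ₁ γ₂ : ℝ → Ω → ℝ)
    (hγ₁ : ∀ g : ℝ, ∀ ω, γ₁ g ω = ((1 - ρ) * g / (k₁ * m₁)) * (X₁ g ω * Y₁ g ω))
    (hγ₂ : ∀ g : ℝ, ∀ ω, γ₂ g ω = ((1 - ρ) * gbar₂ / (k₂ * m₂)) * (X₂ g ω * Y₂ g ω)) :
    Tendsto
      (fun g : ℝ => g ^ α₁ * (1 - ρ) ^ k₂ * (ℙ {ω | γ₁ g ω ≤ γ₂ g ω}).toReal)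
      atTop
      (nhds ((1 - ρ) ^ k₂ * Real.Gamma |k₁ - m₁| * Real.Gamma (k₂ + α₁) *
        Real.Gamma (m₂ + α₁) /
        (α₁ * Real.Gamma m₁ * Real.Gamma m₂ * Real.Gamma k₁ * Real.Gamma k₂) *
        (m₁ * k₁ * gbar₂ / (m₂ * k₂)) ^ α₁)) := by
  have hρ1 : (0:ℝ) < 1 - ρ := by
    have := hρ.2
    linarith
  set c : ℝ := m₁ * k₁ * gbar₂ / (m₂ * k₂) with hc_def
  have hc : 0 < c := by positivity
  have : IsProbabilityMeasure (gammaMeasure k₁ 1) := isProbabilityMeasure_gammaMeasure hk₁ one_pos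
  have : IsProbabilityMeasure (gammaMeasure m₁ 1) := isProbabilityMeasure_gammaMeasure hm₁ one_pos
  have : IsProbabilityMeasure (gammaMeasure k₂ 1) := isProbabilityMeasure_gammaMeasure hk₂ one_pos
  have : IsProbabilityMeasure (gammaMeasure m₂ 1) := isProbabilityMeasure_gammaMeasure hm₂ one_pos
  have hα0 : 0 < α₁ := by rw [hα₁]; exact lt_min hk₁ hm₁
  -- probability representation
  have hprob : ∀ g : ℝ, 0 < g → ℙ {ω | γ₁ g ω ≤ γ₂ g ω}
      = ∫⁻ v, ((gammaMeasure k₁ 1).prod (gammaMeasure m₁ 1))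
          {w : ℝ × ℝ | w.1 * w.2 ≤ c * (v.1 * v.2) / g}
        ∂((gammaMeasure k₂ 1).prod (gammaMeasure m₂ 1)) := by
    intro g hg
    obtain ⟨hmX₁, hmY₁, hmX₂, hmY₂⟩ := hmeas g hg
    have hiInd := hindep g hg
    have hfm : ∀ i : Fin 4, Measurable (![X₁ g, Y₁ g, X₂ g, Y₂ g] i) := by
      intro i
      fin_cases i
      exacts [hmX₁, hmY₁, hmX₂, hmY₂]
    have hpair : IndepFun (fun ω => (X₂ g ω, Y₂ g ω)) (fun ω => (X₁ g ω, Y₁ g ω)) ℙ :=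
      hiInd.indepFun_prodMk_prodMk hfm 2 3 0 1
        (by decide) (by decide) (by decide) (by decide)
    have hmap2 : Measure.map (fun ω => (X₂ g ω, Y₂ g ω)) ℙ
        = (gammaMeasure k₂ 1).prod (gammaMeasure m₂ 1) := by
      rw [(indepFun_iff_map_prod_eq_prod_map_map hmX₂.aemeasurable hmY₂.aemeasurable).mp
        (hiInd.indepFun (show (2:Fin 4) ≠ 3 by decide)), hX₂ g hg, hY₂ g hg]
    have hmap1 : Measure.map (fun ω => (X₁ g ω, Y₁ g ω)) ℙ
        = (gammaMeasure k₁ 1).prod (gammaMeasure m₁ 1) := by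
      rw [(indepFun_iff_map_prod_eq_prod_map_map hmX₁.aemeasurable hmY₁.aemeasurable).mp
        (hiInd.indepFun (show (0:Fin 4) ≠ 1 by decide)), hX₁ g hg, hY₁ g hg]
    set T : Ω → (ℝ × ℝ) × (ℝ × ℝ) :=
      fun ω => ((X₂ g ω, Y₂ g ω), (X₁ g ω, Y₁ g ω)) with hT_def
    have hT : Measurable T := (hmX₂.prodMk hmY₂).prodMk (hmX₁.prodMk hmY₁)
    have hmapT : Measure.map T ℙ
        = ((gammaMeasure k₂ 1).prod (gammaMeasure m₂ 1)).prod
            ((gammaMeasure k₁ 1).prod (gammaMeasure m₁ 1)) := by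
      rw [hT_def, (indepFun_iff_map_prod_eq_prod_map_map
        (hmX₂.prodMk hmY₂).aemeasurable (hmX₁.prodMk hmY₁).aemeasurable).mp hpair,
        hmap2, hmap1]
    set S : Set ((ℝ × ℝ) × (ℝ × ℝ)) :=
      {p | p.2.1 * p.2.2 ≤ c * (p.1.1 * p.1.2) / g} with hS_def
    have hSmeas : MeasurableSet S :=
      measurableSet_le (by fun_prop) (by fun_prop)
    have hiff : ∀ A B : ℝ,
        ((1 - ρ) * g / (k₁ * m₁)) * A ≤ ((1 - ρ) * gbar₂ / (k₂ * m₂)) * B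
          ↔ A ≤ c * B / g := by
      intro A B
      rw [show c * B / g = (((1 - ρ) * gbar₂ / (k₂ * m₂)) * B) / ((1 - ρ) * g / (k₁ * m₁)) by
        rw [hc_def]; field_simp, le_div_iff₀ (by positivity), mul_comm]
    have hset : {ω | γ₁ g ω ≤ γ₂ g ω} = T ⁻¹' S := by
      ext ω
      simp only [mem_setOf_eq, mem_preimage, hT_def, hS_def]
      rw [hγ₁ g ω, hγ₂ g ω]
      exact hiff _ _
    rw [hset, ← Measure.map_apply hT hSmeas, hmapT, Measure.prod_apply hSmeas]
    rfl
  -- apply master lemma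
  have hmaster := master hk₁ hk₂ hm₁ hm₂ hne hα₁ hc
  have hfinal := hmaster.const_mul ((1 - ρ) ^ k₂)
  have hconst : (1 - ρ) ^ k₂ * (Gamma |k₁ - m₁| / (α₁ * Gamma m₁ * Gamma k₁) * c ^ α₁ *
      (Gamma (k₂ + α₁) / Gamma k₂) * (Gamma (m₂ + α₁) / Gamma m₂))
      = (1 - ρ) ^ k₂ * Real.Gamma |k₁ - m₁| * Real.Gamma (k₂ + α₁) *
        Real.Gamma (m₂ + α₁) /
        (α₁ * Real.Gamma m₁ * Real.Gamma m₂ * Real.Gamma k₁ * Real.Gamma k₂) *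
        (m₁ * k₁ * gbar₂ / (m₂ * k₂)) ^ α₁ := by
    rw [← hc_def]
    have h1 := Real.Gamma_pos_of_pos hk₁
    have h2 := Real.Gamma_pos_of_pos hm₁
    have h3 := Real.Gamma_pos_of_pos hk₂
    have h4 := Real.Gamma_pos_of_pos hm₂
    field_simp
  rw [hconst] at hfinal
  refine hfinal.congr' ?_
  filter_upwards [eventually_gt_atTop (0:ℝ)] with g hg
  rw [hprob g hg]
  ring
end

section
/- Let m, k, β, θ > 0 and set A = m/(β θ). Then for every x > 0, ∫_0^∞ [(m/(b β))^m x^{m−1} e^{−m x/(b β)}/Γ(m)] · [b^{k−1} e^{−b/θ}/(Γ(k) θ^k)] db = (2/(Γ(m) Γ(k))) · A^{(m+k)/2} · x^{(m+k)/2 − 1} · K_{m−k}(2√(A x)). -/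
open MeasureTheory Real Set

/-- The modified Bessel function of the second kind,
`K ν z = (1/2) ∫_0^∞ u^(ν-1) exp(-(z/2)(u + 1/u)) du`. -/
noncomputable def besselK (ν z : ℝ) : ℝ :=
  (1 / 2) * ∫ u in Set.Ioi (0:ℝ), u ^ (ν - 1) * Real.exp (-(z / 2) * (u + 1 / u))

theorem stmt_3 (m k β θ A : ℝ) (hm : 0 < m) (hk : 0 < k) (hβ : 0 < β) (hθ : 0 < θ)
    (hA : A = m / (β * θ)) :
    ∀ x : ℝ, 0 < x →
      ∫ b in Set.Ioi (0:ℝ),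
        ((m / (b * β)) ^ m * x ^ (m - 1) * Real.exp (-(m * x) / (b * β)) / Real.Gamma m) *
          (b ^ (k - 1) * Real.exp (-b / θ) / (Real.Gamma k * θ ^ k))
      = (2 / (Real.Gamma m * Real.Gamma k)) * A ^ ((m + k) / 2) * x ^ ((m + k) / 2 - 1) *
          besselK (m - k) (2 * Real.sqrt (A * x)) := by
  intro x hx
  have hApos : 0 < A := by rw [hA]; positivity
  set s : ℝ := Real.sqrt (A * x) with hs_def
  have hs : 0 < s := Real.sqrt_pos.mpr (by positivity)
  have hss : s * s = A * x := Real.mul_self_sqrt (by positivity)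
  set r : ℝ := θ * s with hr_def
  have hr : 0 < r := by positivity
  set c : ℝ := m * x / β with hc_def
  have hc : 0 < c := by positivity
  have hsr : s * r = c := by
    calc s * r = θ * (s * s) := by rw [hr_def]; ring
      _ = θ * (A * x) := by rw [hss]
      _ = c := by rw [hc_def, hA]; field_simp; try ring
  have hsrθ : s / r = 1 / θ := by
    rw [hr_def]; field_simp; try ring
  -- the common integral
  set g : ℝ → ℝ := fun b => b ^ (k - m - 1) * Real.exp (-(c / b + b / θ)) with hg_def
  -- Step A: besselK value
  have hbessel : besselK (m - k) (2 * s) =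
      (1 / 2) * (r ^ (m - k) * ∫ b in Set.Ioi (0:ℝ), g b) := by
    have h2s : 2 * s / 2 = s := by ring
    set f : ℝ → ℝ := fun u => u ^ (m - k - 1) * Real.exp (-s * (u + 1 / u)) with hf_def
    have e0 : besselK (m - k) (2 * s) = (1/2) * ∫ u in Set.Ioi (0:ℝ), f u := by
      rw [besselK, h2s]
    -- scaling u = r * v
    have e1 : (∫ v in Set.Ioi (0:ℝ), f (r * v)) = r⁻¹ * ∫ u in Set.Ioi (0:ℝ), f u := by
      simpa using integral_comp_mul_left_Ioi f 0 hr
    have e1' : (∫ u in Set.Ioi (0:ℝ), f u) = r * ∫ v in Set.Ioi (0:ℝ), f (r * v) := by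
      rw [e1]; field_simp
    -- inversion v = b⁻¹
    have e2 : (∫ b in Set.Ioi (0:ℝ), (|(-1:ℝ)| * b ^ ((-1:ℝ) - 1)) • f (r * b ^ (-1:ℝ)))
        = ∫ v in Set.Ioi (0:ℝ), f (r * v) :=
      integral_comp_rpow_Ioi (fun v => f (r * v)) (by norm_num : (-1:ℝ) ≠ 0)
    have e3 : (∫ b in Set.Ioi (0:ℝ), (|(-1:ℝ)| * b ^ ((-1:ℝ) - 1)) • f (r * b ^ (-1:ℝ)))
        = ∫ b in Set.Ioi (0:ℝ), r ^ (m - k - 1) * g b := by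
      apply setIntegral_congr_fun measurableSet_Ioi
      intro b hb
      have hb : 0 < b := hb
      have hbne : b ≠ 0 := hb.ne'
      have hinv : b ^ ((-1:ℝ)) = b⁻¹ := Real.rpow_neg_one b
      have hrb : r * b⁻¹ = r / b := by field_simp
      simp only [smul_eq_mul, hinv, hrb, abs_neg, abs_one, one_mul, hf_def, hg_def]
      have harg : -s * (r / b + 1 / (r / b)) = -(c / b + b / θ) := by
        have h1 : s * (r / b) = c / b := by rw [← hsr]; ring
        have h2 : 1 / (r / b) = b / r := by field_simp
        have h3 : s * (b / r) = b / θ := by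
          calc s * (b / r) = s / r * b := by ring
            _ = 1 / θ * b := by rw [hsrθ]
            _ = b / θ := by ring
        calc -s * (r / b + 1 / (r / b)) = -(s * (r/b) + s * (1/(r/b))) := by ring
          _ = -(c / b + b / θ) := by rw [h1, h2, h3]
      rw [harg]
      have hpow : (r / b) ^ (m - k - 1) = r ^ (m - k - 1) / b ^ (m - k - 1) :=
        Real.div_rpow hr.le hb.le _
      have hbc : b ^ ((-1:ℝ) - 1) * (b ^ (m - k - 1))⁻¹ = b ^ (k - m - 1) := by
        rw [← Real.rpow_neg hb.le, ← Real.rpow_add hb]; congr 1; ring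
      rw [hpow, div_eq_mul_inv, ← hbc]; ring
    rw [e0, e1', ← e2, e3, integral_const_mul]
    have hrr : r ^ (m - k) = r * r ^ (m - k - 1) := by
      calc r ^ (m - k) = r ^ (1 + (m - k - 1)) := by congr 1; ring
        _ = r * r ^ (m - k - 1) := by rw [Real.rpow_add hr, Real.rpow_one]
    rw [hrr]; ring
  -- Step B: rewrite LHS
  set C : ℝ := x ^ (m - 1) * (m / β) ^ m / (Real.Gamma m * Real.Gamma k * θ ^ k) with hC_def
  have hlhs : (∫ b in Set.Ioi (0:ℝ),
        ((m / (b * β)) ^ m * x ^ (m - 1) * Real.exp (-(m * x) / (b * β)) / Real.Gamma m) *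
          (b ^ (k - 1) * Real.exp (-b / θ) / (Real.Gamma k * θ ^ k)))
      = C * ∫ b in Set.Ioi (0:ℝ), g b := by
    rw [← integral_const_mul]
    apply setIntegral_congr_fun measurableSet_Ioi
    intro b hb
    have hb : 0 < b := hb
    have h1 : m / (b * β) = (m / β) / b := by ring
    have h2 : ((m / β) / b) ^ m = (m / β) ^ m / b ^ m := Real.div_rpow (by positivity) hb.le _
    have h3 : b ^ (k - 1) / b ^ m = b ^ (k - m - 1) := by
      rw [← Real.rpow_sub hb]; congr 1; ring
    have h4 : -(m * x) / (b * β) = -(c / b) := by rw [hc_def]; ring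
    have h5 : Real.exp (-(c / b)) * Real.exp (-(b / θ)) = Real.exp (-(c / b + b / θ)) := by
      rw [← Real.exp_add]; ring_nf
    have hΓm : 0 < Real.Gamma m := Real.Gamma_pos_of_pos hm
    have hΓk : 0 < Real.Gamma k := Real.Gamma_pos_of_pos hk
    have hθk : (0:ℝ) < θ ^ k := Real.rpow_pos_of_pos hθ _
    simp only [hg_def, hC_def]
    rw [h1, h2, h4]
    have hbm : (0:ℝ) < b ^ m := Real.rpow_pos_of_pos hb _
    rw [← h3, ← h5]
    have : Real.exp (-(b/θ)) = Real.exp (-b/θ) := by ring_nf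
    rw [this]
    field_simp
  -- Step C: coefficient identity
  have hcoef : C = 2 / (Real.Gamma m * Real.Gamma k) * A ^ ((m + k) / 2) *
      x ^ ((m + k) / 2 - 1) * ((1 / 2) * r ^ (m - k)) := by
    have hΓm : 0 < Real.Gamma m := Real.Gamma_pos_of_pos hm
    have hΓk : 0 < Real.Gamma k := Real.Gamma_pos_of_pos hk
    have hrmk : r ^ (m - k) = θ ^ (m - k) * (A ^ ((m - k)/2) * x ^ ((m - k)/2)) := by
      rw [hr_def, Real.mul_rpow hθ.le hs.le, hs_def, Real.sqrt_eq_rpow,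
        ← Real.rpow_mul (by positivity : (0:ℝ) ≤ A * x),
        show (1/2) * (m - k) = (m - k)/2 by ring, Real.mul_rpow hApos.le hx.le]
    have hAm : A ^ m = (m / β) ^ m / θ ^ m := by
      rw [hA, show m / (β * θ) = (m / β) / θ by ring]
      exact Real.div_rpow (by positivity) hθ.le _
    have hA2 : A ^ ((m + k)/2) * A ^ ((m - k)/2) = A ^ m := by
      rw [← Real.rpow_add hApos]; congr 1; ring
    have hx2 : x ^ ((m + k)/2 - 1) * x ^ ((m - k)/2) = x ^ (m - 1) := by
      rw [← Real.rpow_add hx]; congr 1; ring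
    have hθ2 : θ ^ (m - k) = θ ^ m / θ ^ k := Real.rpow_sub hθ _ _
    have key : A ^ ((m + k)/2) * x ^ ((m + k)/2 - 1) * (A ^ ((m - k)/2) * x ^ ((m - k)/2))
        = (m / β) ^ m / θ ^ m * x ^ (m - 1) := by
      calc A ^ ((m + k)/2) * x ^ ((m + k)/2 - 1) * (A ^ ((m - k)/2) * x ^ ((m - k)/2))
          = (A ^ ((m + k)/2) * A ^ ((m - k)/2)) * (x ^ ((m + k)/2 - 1) * x ^ ((m - k)/2)) := by
            ring
        _ = A ^ m * x ^ (m - 1) := by rw [hA2, hx2]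
        _ = (m / β) ^ m / θ ^ m * x ^ (m - 1) := by rw [hAm]
    have hθm : (0:ℝ) < θ ^ m := Real.rpow_pos_of_pos hθ _
    have hθk : (0:ℝ) < θ ^ k := Real.rpow_pos_of_pos hθ _
    have expand : 2 / (Real.Gamma m * Real.Gamma k) * A ^ ((m + k) / 2) *
        x ^ ((m + k) / 2 - 1) * ((1 / 2) * r ^ (m - k))
        = (A ^ ((m + k)/2) * x ^ ((m + k)/2 - 1) * (A ^ ((m - k)/2) * x ^ ((m - k)/2)))
          * (θ ^ m / θ ^ k) / (Real.Gamma m * Real.Gamma k) := by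
      rw [hrmk, hθ2]; ring
    rw [hC_def, expand, key]
    field_simp
    try ring
  rw [hlhs, hbessel, hcoef]; ring
end

section
/- Let a, b > 0 with a ≠ b, set α = min(a, b), and let X, Y be independent random variables with X ~ Gamma(a, 1) and Y ~ Gamma(b, 1). Then lim_{s → 0+} s^{−α} · P(X·Y ≤ s) = Γ(|a − b|) / (α · Γ(a) · Γ(b)). -/
open MeasureTheory ProbabilityTheory Real Set Filter
open scoped NNReal ENNReal



noncomputable def Fc (a t : ℝ) : ℝ := ∫ x in Set.Ioc 0 t, x ^ (a - 1) * Real.exp (-x) / Real.Gamma a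

lemma Fc_nonneg {a : ℝ} (ha : 0 < a) (t : ℝ) : 0 ≤ Fc a t := by
  apply setIntegral_nonneg measurableSet_Ioc
  intro x hx
  have hx0 : 0 < x := hx.1
  have hg : 0 < Real.Gamma a := Real.Gamma_pos_of_pos ha
  positivity

lemma integrableOn_Fc_integrand {a : ℝ} (ha : 0 < a) (t : ℝ) :
    IntegrableOn (fun x => x ^ (a - 1) * Real.exp (-x) / Real.Gamma a) (Set.Ioc 0 t) := by
  have h := (Real.GammaIntegral_convergent ha).mono_set (Set.Ioc_subset_Ioi_self (a := t) (b := 0))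
  exact MeasureTheory.IntegrableOn.congr_fun (h.div_const (Real.Gamma a))
    (fun x _ => by ring) measurableSet_Ioc

lemma gammaMeasure_Iic {a : ℝ} (ha : 0 < a) (t : ℝ) :
    gammaMeasure a 1 (Set.Iic t) = ENNReal.ofReal (Fc a t) := by
  have hg : 0 < Real.Gamma a := Real.Gamma_pos_of_pos ha
  have habs : gammaMeasure a 1 (Set.Iic 0) = 0 := by
    rw [gammaMeasure, withDensity_apply _ measurableSet_Iic]
    refine le_antisymm ?_ zero_le
    rw [show Set.Iic (0:ℝ) = Set.Iio 0 ∪ {0} from (Set.Iio_union_right).symm]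
    refine le_trans (lintegral_union_le _ _ _) ?_
    rw [lintegral_gammaPDF_of_nonpos le_rfl, setLIntegral_measure_zero _ _ (measure_singleton 0)]
    simp
  rcases le_or_gt t 0 with ht | ht
  · have h0 : gammaMeasure a 1 (Set.Iic t) = 0 :=
      measure_mono_null (Set.Iic_subset_Iic.mpr ht) habs
    have h1 : Fc a t = 0 := by
      unfold Fc
      rw [Set.Ioc_eq_empty (by linarith), Measure.restrict_empty, integral_zero_measure]
    rw [h0, h1, ENNReal.ofReal_zero]
  · have hsplit : gammaMeasure a 1 (Set.Iic t) = gammaMeasure a 1 (Set.Ioc 0 t) := by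
      refine le_antisymm ?_ (measure_mono Set.Ioc_subset_Iic_self)
      calc gammaMeasure a 1 (Set.Iic t)
          ≤ gammaMeasure a 1 (Set.Iic 0) + gammaMeasure a 1 (Set.Ioc 0 t) := by
            rw [← Set.Iic_union_Ioc_eq_Iic ht.le]; exact measure_union_le _ _
        _ = gammaMeasure a 1 (Set.Ioc 0 t) := by rw [habs, zero_add]
    rw [hsplit, gammaMeasure, withDensity_apply _ measurableSet_Ioc]
    have hcong : ∫⁻ x in Set.Ioc 0 t, gammaPDF a 1 x
        = ∫⁻ x in Set.Ioc 0 t, ENNReal.ofReal (x ^ (a-1) * Real.exp (-x) / Real.Gamma a) := by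
      apply setLIntegral_congr_fun measurableSet_Ioc
      intro x hx
      rw [gammaPDF_of_nonneg hx.1.le]
      congr 1
      rw [Real.one_rpow]
      ring_nf
    rw [hcong, ← ofReal_integral_eq_lintegral_ofReal (integrableOn_Fc_integrand ha t) ?_]
    · rfl
    · rw [EventuallyLE, ae_restrict_iff' measurableSet_Ioc]
      filter_upwards with x hx
      have hx0 : 0 < x := hx.1
      positivity

lemma Fc_def (a t : ℝ) : Fc a t = ∫ x in Set.Ioc 0 t, x ^ (a - 1) * Real.exp (-x) / Real.Gamma a := rfl

lemma Fc_zero (a : ℝ) : Fc a 0 = 0 := by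
  rw [Fc_def, Set.Ioc_self, Measure.restrict_empty, integral_zero_measure]


lemma Fc_eq_toReal {a : ℝ} (ha : 0 < a) (t : ℝ) :
    Fc a t = (gammaMeasure a 1 (Set.Iic t)).toReal := by
  rw [gammaMeasure_Iic ha, ENNReal.toReal_ofReal (Fc_nonneg ha t)]

lemma Fc_le_one {a : ℝ} (ha : 0 < a) (t : ℝ) : Fc a t ≤ 1 := by
  have : IsProbabilityMeasure (gammaMeasure a 1) := isProbabilityMeasure_gammaMeasure ha one_pos
  rw [Fc_eq_toReal ha]
  exact ENNReal.toReal_le_of_le_ofReal zero_le_one (by simpa using prob_le_one)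

lemma Fc_mono {a : ℝ} (ha : 0 < a) : Monotone (Fc a) := by
  intro t1 t2 h
  have : IsProbabilityMeasure (gammaMeasure a 1) := isProbabilityMeasure_gammaMeasure ha one_pos
  rw [Fc_eq_toReal ha, Fc_eq_toReal ha]
  exact ENNReal.toReal_mono (measure_ne_top _ _) (measure_mono (Set.Iic_subset_Iic.mpr h))

lemma integral_Ioc_rpow {a t : ℝ} (ha : 0 < a) (ht : 0 < t) :
    ∫ x in Set.Ioc 0 t, x ^ (a - 1) = t ^ a / a := by
  rw [← intervalIntegral.integral_of_le ht.le, integral_rpow (Or.inl (by linarith))]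
  have h1 : a - 1 + 1 = a := by ring
  rw [h1, Real.zero_rpow ha.ne', sub_zero]

lemma integrableOn_Ioc_rpow {a t : ℝ} (ha : 0 < a) (ht : 0 < t) :
    IntegrableOn (fun x : ℝ => x ^ (a - 1)) (Set.Ioc 0 t) := by
  rw [← intervalIntegrable_iff_integrableOn_Ioc_of_le ht.le]
  exact intervalIntegral.intervalIntegrable_rpow' (by linarith)

lemma Fc_le {a t : ℝ} (ha : 0 < a) (ht : 0 < t) : Fc a t ≤ t ^ a / a / Real.Gamma a := by
  have hg : 0 < Real.Gamma a := Real.Gamma_pos_of_pos ha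
  rw [Fc_def]
  calc ∫ x in Set.Ioc 0 t, x ^ (a - 1) * Real.exp (-x) / Real.Gamma a
      ≤ ∫ x in Set.Ioc 0 t, x ^ (a - 1) / Real.Gamma a := by
        apply setIntegral_mono_on (integrableOn_Fc_integrand ha t)
          ((integrableOn_Ioc_rpow ha ht).div_const _) measurableSet_Ioc
        intro x hx
        have hx0 : 0 < x := hx.1
        have he : Real.exp (-x) ≤ 1 := Real.exp_le_one_iff.mpr (by linarith)
        have hr : 0 ≤ x ^ (a - 1) := Real.rpow_nonneg hx0.le _
        calc x ^ (a - 1) * Real.exp (-x) / Real.Gamma a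
            ≤ x ^ (a - 1) * 1 / Real.Gamma a := by gcongr
          _ = x ^ (a - 1) / Real.Gamma a := by ring
    _ = t ^ a / a / Real.Gamma a := by rw [integral_div, integral_Ioc_rpow ha ht]

lemma Fc_ge {a t : ℝ} (ha : 0 < a) (ht : 0 < t) :
    Real.exp (-t) * (t ^ a / a) / Real.Gamma a ≤ Fc a t := by
  have hg : 0 < Real.Gamma a := Real.Gamma_pos_of_pos ha
  rw [Fc_def]
  have h1 : ∫ x in Set.Ioc 0 t, (Real.exp (-t) / Real.Gamma a) * x ^ (a - 1)
      ≤ ∫ x in Set.Ioc 0 t, x ^ (a - 1) * Real.exp (-x) / Real.Gamma a := by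
    apply setIntegral_mono_on ((integrableOn_Ioc_rpow ha ht).const_mul _)
      (integrableOn_Fc_integrand ha t) measurableSet_Ioc
    intro x hx
    have hx0 : 0 < x := hx.1
    have he : Real.exp (-t) ≤ Real.exp (-x) := Real.exp_le_exp.mpr (by linarith [hx.2])
    have hr : 0 ≤ x ^ (a - 1) := Real.rpow_nonneg hx0.le _
    calc Real.exp (-t) / Real.Gamma a * x ^ (a - 1)
        = x ^ (a - 1) * Real.exp (-t) / Real.Gamma a := by ring
      _ ≤ x ^ (a - 1) * Real.exp (-x) / Real.Gamma a := by gcongr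
  calc Real.exp (-t) * (t ^ a / a) / Real.Gamma a
      = ∫ x in Set.Ioc 0 t, (Real.exp (-t) / Real.Gamma a) * x ^ (a - 1) := by
        rw [integral_const_mul, integral_Ioc_rpow ha ht]; ring
    _ ≤ _ := h1

lemma tendsto_Fc {a : ℝ} (ha : 0 < a) :
    Tendsto (fun t => t ^ (-a) * Fc a t) (nhdsWithin 0 (Set.Ioi 0))
      (nhds (1 / (a * Real.Gamma a))) := by
  have hg : 0 < Real.Gamma a := Real.Gamma_pos_of_pos ha
  have hlow : Tendsto (fun t => Real.exp (-t) / (a * Real.Gamma a)) (nhdsWithin 0 (Set.Ioi 0))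
      (nhds (1 / (a * Real.Gamma a))) := by
    have hc : Continuous fun t : ℝ => Real.exp (-t) / (a * Real.Gamma a) := by continuity
    have h0 := hc.tendsto 0
    simp only [neg_zero, Real.exp_zero] at h0
    exact h0.mono_left nhdsWithin_le_nhds
  apply tendsto_of_tendsto_of_tendsto_of_le_of_le' hlow tendsto_const_nhds
  · filter_upwards [self_mem_nhdsWithin] with t (ht : 0 < t)
    have hne : t ^ a ≠ 0 := (Real.rpow_pos_of_pos ht a).ne'
    have h1 : t ^ (-a) * (Real.exp (-t) * (t ^ a / a) / Real.Gamma a)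
        = Real.exp (-t) / (a * Real.Gamma a) := by
      rw [Real.rpow_neg ht.le]
      field_simp
    calc Real.exp (-t) / (a * Real.Gamma a)
        = t ^ (-a) * (Real.exp (-t) * (t ^ a / a) / Real.Gamma a) := h1.symm
      _ ≤ t ^ (-a) * Fc a t := by
          have := Fc_ge ha ht
          exact mul_le_mul_of_nonneg_left this (Real.rpow_nonneg ht.le _)
  · filter_upwards [self_mem_nhdsWithin] with t (ht : 0 < t)
    have hne : t ^ a ≠ 0 := (Real.rpow_pos_of_pos ht a).ne'
    have h1 : t ^ (-a) * (t ^ a / a / Real.Gamma a) = 1 / (a * Real.Gamma a) := by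
      rw [Real.rpow_neg ht.le]
      field_simp
    calc t ^ (-a) * Fc a t
        ≤ t ^ (-a) * (t ^ a / a / Real.Gamma a) :=
          mul_le_mul_of_nonneg_left (Fc_le ha ht) (Real.rpow_nonneg ht.le _)
      _ = 1 / (a * Real.Gamma a) := h1


lemma tendsto_Fc_y {a y : ℝ} (ha : 0 < a) (hy : 0 < y) :
    Tendsto (fun s => s ^ (-a) * Fc a (s / y)) (nhdsWithin 0 (Set.Ioi 0))
      (nhds (y ^ (-a) * (1 / (a * Real.Gamma a)))) := by
  have hdiv : Tendsto (fun s : ℝ => s / y) (nhdsWithin 0 (Set.Ioi 0))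
      (nhdsWithin 0 (Set.Ioi 0)) := by
    rw [tendsto_nhdsWithin_iff]
    constructor
    · have : Tendsto (fun s : ℝ => s / y) (nhds 0) (nhds (0 / y)) :=
        (continuous_id.div_const y).tendsto 0
      simpa using this.mono_left nhdsWithin_le_nhds
    · filter_upwards [self_mem_nhdsWithin] with s (hs : 0 < s)
      exact div_pos hs hy
  have hcomp := (tendsto_Fc ha).comp hdiv
  have hmul := hcomp.const_mul (y ^ (-a))
  apply hmul.congr'
  filter_upwards [self_mem_nhdsWithin] with s (hs : 0 < s)
  show y ^ (-a) * ((s / y) ^ (-a) * Fc a (s / y)) = s ^ (-a) * Fc a (s / y)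
  have h1 : (s / y) ^ (-a) = s ^ (-a) / y ^ (-a) := Real.div_rpow hs.le hy.le (-a)
  have hyne : y ^ (-a) ≠ 0 := (Real.rpow_pos_of_pos hy _).ne'
  rw [h1]
  field_simp

lemma gammaMeasure_ae_pos {b : ℝ} (hb : 0 < b)
    (h0 : gammaMeasure b 1 (Set.Iic 0) = 0) :
    ∀ᵐ y ∂(gammaMeasure b 1), y ∈ Set.Ioi (0:ℝ) := by
  rw [Filter.eventually_iff, mem_ae_iff]
  have : {y : ℝ | y ∈ Set.Ioi (0:ℝ)}ᶜ = Set.Iic 0 := by ext y; simp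
  rw [this]; exact h0

lemma integrable_bound {a b : ℝ} (ha : 0 < a) (hb : 0 < b) (hab : a < b) :
    Integrable (fun y : ℝ => y ^ (-a)) (gammaMeasure b 1) := by
  have hba : (0:ℝ) < b - a := by linarith
  have hpdf2 : gammaPDF b 1 = fun x => ENNReal.ofReal (gammaPDFReal b 1 x) := rfl
  rw [gammaMeasure, hpdf2, integrable_withDensity_iff
    ((measurable_gammaPDFReal b 1).ennreal_ofReal) (ae_of_all _ fun x => ENNReal.ofReal_lt_top)]
  have hre : ∀ y : ℝ, (ENNReal.ofReal (gammaPDFReal b 1 y)).toReal = gammaPDFReal b 1 y := fun y =>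
    ENNReal.toReal_ofReal (gammaPDFReal_nonneg hb one_pos y)
  simp_rw [hre]
  rw [← integrableOn_univ, ← Set.Iic_union_Ioi (a := (0:ℝ)), integrableOn_union]
  constructor
  · apply MeasureTheory.IntegrableOn.congr_fun (integrableOn_zero : IntegrableOn (fun _ => (0:ℝ)) (Set.Iic (0:ℝ)) volume)
      ?_ measurableSet_Iic
    intro x hx
    have hx' : x ≤ 0 := hx
    rcases lt_or_eq_of_le hx' with h | h
    · simp [gammaPDFReal, not_le.mpr h]
    · subst h
      simp [Real.zero_rpow (neg_ne_zero.mpr ha.ne')]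
  · have hint := (Real.GammaIntegral_convergent hba).div_const (Real.Gamma b)
    apply MeasureTheory.IntegrableOn.congr_fun hint ?_ measurableSet_Ioi
    intro y hy
    have hy0 : (0:ℝ) < y := hy
    show Real.exp (-y) * y ^ (b - a - 1) / Real.Gamma b = y ^ (-a) * gammaPDFReal b 1 y
    rw [gammaPDFReal, if_pos hy0.le, Real.one_rpow, one_mul,
      show b - a - 1 = -a + (b - 1) by ring, Real.rpow_add hy0]
    ring

lemma integral_bound {a b : ℝ} (ha : 0 < a) (hb : 0 < b) (hab : a < b) :
    ∫ y, y ^ (-a) ∂(gammaMeasure b 1) = Real.Gamma (b - a) / Real.Gamma b := by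
  have hba : (0:ℝ) < b - a := by linarith
  have hpdf : gammaPDF b 1 = fun x => ((Real.toNNReal (gammaPDFReal b 1 x) : ℝ≥0) : ℝ≥0∞) := rfl
  rw [gammaMeasure, hpdf,
    integral_withDensity_eq_integral_smul (measurable_gammaPDFReal b 1).real_toNNReal]
  have hco : ∀ y : ℝ, (Real.toNNReal (gammaPDFReal b 1 y) : ℝ≥0) • y ^ (-a)
      = gammaPDFReal b 1 y * y ^ (-a) := by
    intro y
    rw [NNReal.smul_def, Real.coe_toNNReal _ (gammaPDFReal_nonneg hb one_pos y), smul_eq_mul]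
  simp_rw [hco]
  rw [← setIntegral_eq_integral_of_forall_compl_eq_zero (s := Set.Ioi (0:ℝ)) ?_]
  · rw [setIntegral_congr_fun measurableSet_Ioi
      (g := fun y => Real.exp (-y) * y ^ (b - a - 1) / Real.Gamma b) ?_]
    · rw [integral_div, ← Real.Gamma_eq_integral hba]
    · intro y hy
      have hy0 : (0:ℝ) < y := hy
      show gammaPDFReal b 1 y * y ^ (-a) = Real.exp (-y) * y ^ (b - a - 1) / Real.Gamma b
      rw [gammaPDFReal, if_pos hy0.le, Real.one_rpow, one_mul,
        show b - a - 1 = -a + (b - 1) by ring, Real.rpow_add hy0]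
      ring
  · intro x hx
    simp only [Set.mem_Ioi, not_lt] at hx
    rcases lt_or_eq_of_le hx with h | h
    · simp [gammaPDFReal, not_le.mpr h]
    · subst h
      simp [Real.zero_rpow (neg_ne_zero.mpr ha.ne')]


lemma key {Ω : Type*} [MeasureSpace Ω] [IsProbabilityMeasure (ℙ : Measure Ω)]
    (a b : ℝ) (ha : 0 < a) (hb : 0 < b) (hab : a < b)
    (X Y : Ω → ℝ) (hXm : Measurable X) (hYm : Measurable Y)
    (hX : Measure.map X ℙ = gammaMeasure a 1)
    (hY : Measure.map Y ℙ = gammaMeasure b 1)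
    (hindep : IndepFun X Y ℙ) :
    Tendsto (fun s : ℝ => s ^ (-a) * (ℙ {ω | X ω * Y ω ≤ s}).toReal)
      (nhdsWithin 0 (Set.Ioi 0))
      (nhds (Real.Gamma (b - a) / (a * Real.Gamma a * Real.Gamma b))) := by
  have hg : 0 < Real.Gamma a := Real.Gamma_pos_of_pos ha
  have hgb : 0 < Real.Gamma b := Real.Gamma_pos_of_pos hb
  set μ := gammaMeasure a 1 with hμ
  set ν := gammaMeasure b 1 with hν
  haveI : IsProbabilityMeasure μ := isProbabilityMeasure_gammaMeasure ha one_pos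
  haveI : IsProbabilityMeasure ν := isProbabilityMeasure_gammaMeasure hb one_pos
  have hν0 : ν (Set.Iic 0) = 0 := by
    rw [hν, gammaMeasure_Iic hb, Fc_zero, ENNReal.ofReal_zero]
  have hae : ∀ᵐ y ∂ν, y ∈ Set.Ioi (0:ℝ) := gammaMeasure_ae_pos hb hν0
  have hmap : Measure.map (fun ω => (X ω, Y ω)) ℙ = μ.prod ν := by
    rw [← hX, ← hY]
    exact (indepFun_iff_map_prod_eq_prod_map_map hXm.aemeasurable hYm.aemeasurable).mp hindep
  have hSm : ∀ s : ℝ, MeasurableSet {p : ℝ × ℝ | p.1 * p.2 ≤ s} := fun s =>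
    measurableSet_le (measurable_fst.mul measurable_snd) measurable_const
  have hP : ∀ s : ℝ, ℙ {ω | X ω * Y ω ≤ s} = (μ.prod ν) {p : ℝ × ℝ | p.1 * p.2 ≤ s} := by
    intro s
    rw [← hmap, Measure.map_apply (hXm.prodMk hYm) (hSm s)]
    rfl
  have h2 : ∀ s : ℝ, 0 < s → (μ.prod ν) {p : ℝ × ℝ | p.1 * p.2 ≤ s}
      = ∫⁻ y, ENNReal.ofReal (Fc a (s / y)) ∂ν := by
    intro s hs
    rw [Measure.prod_apply_symm (hSm s)]
    apply lintegral_congr_ae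
    filter_upwards [hae] with y hy
    have hpre : ((fun x => (x, y)) ⁻¹' {p : ℝ × ℝ | p.1 * p.2 ≤ s}) = Set.Iic (s / y) := by
      ext x
      simp only [Set.mem_preimage, Set.mem_setOf_eq, Set.mem_Iic]
      exact (le_div_iff₀ hy).symm
    rw [hpre, hμ, gammaMeasure_Iic ha]
  have hFmeas : Measurable (Fc a) := (Fc_mono ha).measurable
  have hint : ∀ s : ℝ, Integrable (fun y => Fc a (s / y)) ν := by
    intro s
    refine (integrable_const (1:ℝ)).mono'
      ((hFmeas.comp (measurable_const.div measurable_id)).aestronglyMeasurable) ?_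
    filter_upwards with y
    rw [Real.norm_eq_abs, abs_of_nonneg (Fc_nonneg ha _)]
    exact Fc_le_one ha _
  have h3 : ∀ s : ℝ, 0 < s → (ℙ {ω | X ω * Y ω ≤ s}).toReal = ∫ y, Fc a (s / y) ∂ν := by
    intro s hs
    have h4 : ENNReal.ofReal (∫ y, Fc a (s / y) ∂ν) = (μ.prod ν) {p : ℝ × ℝ | p.1 * p.2 ≤ s} := by
      rw [ofReal_integral_eq_lintegral_ofReal (hint s) (ae_of_all _ fun y => Fc_nonneg ha _),
        ← h2 s hs]
    rw [hP s, ← h4, ENNReal.toReal_ofReal (integral_nonneg fun y => Fc_nonneg ha _)]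
  have hconst : Real.Gamma (b - a) / (a * Real.Gamma a * Real.Gamma b)
      = ∫ y, y ^ (-a) * (1 / (a * Real.Gamma a)) ∂ν := by
    rw [integral_mul_const, hν, integral_bound ha hb hab, div_mul_div_comm, mul_one]
    ring
  have hdct : Tendsto (fun s : ℝ => ∫ y, s ^ (-a) * Fc a (s / y) ∂ν)
      (nhdsWithin 0 (Set.Ioi 0))
      (nhds (∫ y, y ^ (-a) * (1 / (a * Real.Gamma a)) ∂ν)) := by
    apply tendsto_integral_filter_of_dominated_convergence
      (bound := fun y => y ^ (-a) * (1 / (a * Real.Gamma a)))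
    · exact Filter.Eventually.of_forall fun s =>
        ((hFmeas.comp (measurable_const.div measurable_id)).const_mul _).aestronglyMeasurable
    · filter_upwards [self_mem_nhdsWithin] with s (hs : 0 < s)
      filter_upwards [hae] with y hy
      have hsy : 0 < s / y := div_pos hs hy
      have hnn : 0 ≤ s ^ (-a) * Fc a (s / y) :=
        mul_nonneg (Real.rpow_nonneg hs.le _) (Fc_nonneg ha _)
      rw [Real.norm_eq_abs, abs_of_nonneg hnn]
      have hb1 : s ^ (-a) * Fc a (s / y) ≤ s ^ (-a) * ((s / y) ^ a / a / Real.Gamma a) :=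
        mul_le_mul_of_nonneg_left (Fc_le ha hsy) (Real.rpow_nonneg hs.le _)
      have heq : s ^ (-a) * ((s / y) ^ a / a / Real.Gamma a)
          = y ^ (-a) * (1 / (a * Real.Gamma a)) := by
        rw [Real.div_rpow hs.le hy.le, Real.rpow_neg hs.le, Real.rpow_neg hy.le]
        have h1 : s ^ a ≠ 0 := (Real.rpow_pos_of_pos hs a).ne'
        have h2 : y ^ a ≠ 0 := (Real.rpow_pos_of_pos hy a).ne'
        field_simp
      rw [← heq]
      exact hb1
    · exact (integrable_bound ha hb hab).mul_const _
    · filter_upwards [hae] with y hy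
      exact tendsto_Fc_y ha hy
  rw [hconst]
  apply hdct.congr'
  filter_upwards [self_mem_nhdsWithin] with s (hs : 0 < s)
  rw [h3 s hs, integral_const_mul]

theorem stmt_10 {Ω : Type*} [MeasureSpace Ω] [IsProbabilityMeasure (ℙ : Measure Ω)]
    (a b : ℝ) (ha : 0 < a) (hb : 0 < b) (hne : a ≠ b) (α : ℝ) (hα : α = min a b)
    (X Y : Ω → ℝ) (hXm : Measurable X) (hYm : Measurable Y)
    (hX : Measure.map X ℙ = gammaMeasure a 1)
    (hY : Measure.map Y ℙ = gammaMeasure b 1)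
    (hindep : IndepFun X Y ℙ) :
    Tendsto (fun s : ℝ => s ^ (-α) * (ℙ {ω | X ω * Y ω ≤ s}).toReal)
      (nhdsWithin 0 (Set.Ioi 0))
      (nhds (Real.Gamma |a - b| / (α * Real.Gamma a * Real.Gamma b))) := by
  rcases lt_or_gt_of_ne hne with h | h
  · have hα' : α = a := by rw [hα, min_eq_left h.le]
    have habs : |a - b| = b - a := by rw [abs_of_neg (by linarith)]; ring
    rw [hα', habs]
    exact key a b ha hb h X Y hXm hYm hX hY hindep
  · have hα' : α = b := by rw [hα, min_eq_right h.le]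
    have habs : |a - b| = a - b := abs_of_pos (by linarith)
    rw [hα', habs]
    have hsets : ∀ s : ℝ, {ω | X ω * Y ω ≤ s} = {ω | Y ω * X ω ≤ s} := by
      intro s; ext ω; simp [mul_comm]
    have hk := key b a hb ha h Y X hYm hXm hY hX hindep.symm
    simp_rw [← hsets] at hk
    have : Real.Gamma (a - b) / (b * Real.Gamma b * Real.Gamma a)
        = Real.Gamma (a - b) / (b * Real.Gamma a * Real.Gamma b) := by ring_nf
    rwa [this] at hk
end

section
/- Let a, b > 0 with a ≠ b, set α = min(a, b), and let X, Y be independent random variables with X ~ Gamma(a, 1) and Y ~ Gamma(b, 1). Then for every s > 0, P(X·Y ≤ s) ≤ Γ(|a − b|) / (α · Γ(a) · Γ(b)) · s^{α}. -/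
open MeasureTheory ProbabilityTheory Real Set

lemma gamma_Iic_le' {a t : ℝ} (ha : 0 < a) (ht : 0 < t) :
    gammaMeasure a 1 (Iic t) ≤ ENNReal.ofReal (t ^ a / (a * Real.Gamma a)) := by
  rw [gammaMeasure, withDensity_apply _ measurableSet_Iic]
  have h0 : ∫⁻ x in Iic (0:ℝ), gammaPDF a 1 x = 0 := by
    rw [← setLIntegral_congr Iio_ae_eq_Iic]
    exact lintegral_gammaPDF_of_nonpos le_rfl
  have hsplit : ∫⁻ x in Iic t, gammaPDF a 1 x = ∫⁻ x in Ioc 0 t, gammaPDF a 1 x := by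
    rw [← Iic_union_Ioc_eq_Iic ht.le, lintegral_union measurableSet_Ioc
      (Iic_disjoint_Ioc le_rfl), h0, zero_add]
  rw [hsplit]
  have hmono : ∫⁻ x in Ioc 0 t, gammaPDF a 1 x
      ≤ ∫⁻ x in Ioc 0 t, ENNReal.ofReal (x ^ (a - 1) / Real.Gamma a) := by
    refine setLIntegral_mono' measurableSet_Ioc fun x hx => ?_
    rw [gammaPDF_of_nonneg hx.1.le]
    apply ENNReal.ofReal_le_ofReal
    rw [one_rpow, one_mul]
    have h1 : exp (-x) ≤ 1 := exp_le_one_iff.mpr (by linarith [hx.1])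
    have hx0 : (0:ℝ) < x := hx.1
    have hg := Real.Gamma_pos_of_pos ha
    calc 1 / Real.Gamma a * x ^ (a - 1) * exp (-x)
        ≤ 1 / Real.Gamma a * x ^ (a - 1) * 1 := by
          apply mul_le_mul_of_nonneg_left h1
          positivity
      _ = x ^ (a - 1) / Real.Gamma a := by ring
  refine hmono.trans (le_of_eq ?_)
  have hint : IntegrableOn (fun x => x ^ (a - 1) / Real.Gamma a) (Ioc 0 t) := by
    have := (intervalIntegral.intervalIntegrable_rpow' (show (-1:ℝ) < a - 1 by linarith) (a := 0) (b := t))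
    exact ((intervalIntegrable_iff_integrableOn_Ioc_of_le ht.le).mp this).div_const _
  rw [← ofReal_integral_eq_lintegral_ofReal hint ?hnn]
  case hnn =>
    refine (ae_restrict_iff' measurableSet_Ioc).mpr (ae_of_all _ fun x hx => ?_)
    have := Real.Gamma_pos_of_pos ha
    have := hx.1
    positivity
  congr 1
  rw [integral_div, ← intervalIntegral.integral_of_le ht.le,
    integral_rpow (Or.inl (by linarith))]
  rw [sub_add_cancel, Real.zero_rpow ha.ne', sub_zero, div_div]


lemma key_bound {Ω : Type*} [MeasureSpace Ω] [IsProbabilityMeasure (ℙ : Measure Ω)]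
    {a b : ℝ} (ha : 0 < a) (hab : a < b)
    (X Y : Ω → ℝ) (hXm : Measurable X) (hYm : Measurable Y)
    (hX : Measure.map X ℙ = gammaMeasure a 1)
    (hY : Measure.map Y ℙ = gammaMeasure b 1)
    (hindep : IndepFun X Y ℙ) {s : ℝ} (hs : 0 < s) :
    ℙ {ω | X ω * Y ω ≤ s}
      ≤ ENNReal.ofReal (Real.Gamma (b - a) / (a * Real.Gamma a * Real.Gamma b) * s ^ a) := by
  have hb : 0 < b := ha.trans hab
  have hd : 0 < b - a := by linarith
  have hGa := Real.Gamma_pos_of_pos ha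
  have hGb := Real.Gamma_pos_of_pos hb
  haveI hμP : IsProbabilityMeasure (gammaMeasure a 1) := isProbabilityMeasure_gammaMeasure ha one_pos
  haveI hνP : IsProbabilityMeasure (gammaMeasure b 1) := isProbabilityMeasure_gammaMeasure hb one_pos
  have hSm : MeasurableSet {p : ℝ × ℝ | p.1 * p.2 ≤ s} :=
    measurableSet_le (measurable_fst.mul measurable_snd) measurable_const
  have hmap : Measure.map (fun ω => (X ω, Y ω)) ℙ = (gammaMeasure a 1).prod (gammaMeasure b 1) := by
    rw [← hX, ← hY]
    exact (indepFun_iff_map_prod_eq_prod_map_map hXm.aemeasurable hYm.aemeasurable).mp hindep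
  have h1 : ℙ {ω | X ω * Y ω ≤ s} = ((gammaMeasure a 1).prod (gammaMeasure b 1)) {p : ℝ × ℝ | p.1 * p.2 ≤ s} := by
    rw [← hmap, Measure.map_apply (hXm.prodMk hYm) hSm]
    rfl
  rw [h1, Measure.prod_apply_symm hSm]
  have hν0 : gammaMeasure b 1 (Iic 0) = 0 := by
    rw [gammaMeasure, withDensity_apply _ measurableSet_Iic,
      ← setLIntegral_congr Iio_ae_eq_Iic]
    exact lintegral_gammaPDF_of_nonpos le_rfl
  have hae : ∀ᵐ y ∂(gammaMeasure b 1), 0 < y := by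
    rw [ae_iff]
    refine measure_mono_null (fun y hy => ?_) hν0
    simpa using not_lt.mp hy
  have step1 : ∫⁻ y, gammaMeasure a 1 ((fun x => (x, y)) ⁻¹' {p : ℝ × ℝ | p.1 * p.2 ≤ s}) ∂(gammaMeasure b 1)
      ≤ ∫⁻ y, ENNReal.ofReal ((s / y) ^ a / (a * Real.Gamma a)) ∂(gammaMeasure b 1) := by
    refine lintegral_mono_ae (hae.mono fun y hy => ?_)
    have hset : (fun x => (x, y)) ⁻¹' {p : ℝ × ℝ | p.1 * p.2 ≤ s} = Iic (s / y) := by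
      ext x
      simp [le_div_iff₀ hy]
    rw [hset]
    exact gamma_Iic_le' ha (div_pos hs hy)
  refine step1.trans (le_of_eq ?_)
  have hgm : Measurable fun y : ℝ => ENNReal.ofReal ((s / y) ^ a / (a * Real.Gamma a)) := by
    exact (((measurable_id'.const_div s).pow_const a).div_const _).ennreal_ofReal
  rw [gammaMeasure, lintegral_withDensity_eq_lintegral_mul _
    (show Measurable (gammaPDF b 1) from (measurable_gammaPDFReal b 1).ennreal_ofReal) hgm]
  have hzero : ∫⁻ y in Iic (0:ℝ),
      gammaPDF b 1 y * ENNReal.ofReal ((s / y) ^ a / (a * Real.Gamma a)) = 0 := by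
    rw [← setLIntegral_congr Iio_ae_eq_Iic,
      setLIntegral_congr_fun measurableSet_Iio
        (fun y (hy : y < 0) => by rw [gammaPDF_of_neg hy, zero_mul]),
      lintegral_zero]
  simp only [Pi.mul_apply]
  have hsplit := (lintegral_add_compl (μ := volume)
    (fun y => gammaPDF b 1 y * ENNReal.ofReal ((s / y) ^ a / (a * Real.Gamma a)))
    (measurableSet_Iic (a := (0:ℝ)))).symm
  rw [compl_Iic] at hsplit
  rw [hsplit, hzero, zero_add]
  have hptwise : ∀ y ∈ Ioi (0:ℝ),
      gammaPDF b 1 y * ENNReal.ofReal ((s / y) ^ a / (a * Real.Gamma a))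
        = ENNReal.ofReal (s ^ a / (a * Real.Gamma a * Real.Gamma b))
          * ENNReal.ofReal (exp (-y) * y ^ (b - a - 1)) := by
    intro y hy
    have hy0 : (0:ℝ) < y := hy
    rw [gammaPDF_of_nonneg hy0.le, ← ENNReal.ofReal_mul (by positivity),
      ← ENNReal.ofReal_mul (by positivity)]
    congr 1
    have e1 : (s / y) ^ a = s ^ a / y ^ a := div_rpow hs.le hy0.le a
    have e2 : y ^ (b - a - 1) = y ^ (b - 1) / y ^ a := by
      rw [← rpow_sub hy0]; ring_nf
    have hya : (0:ℝ) < y ^ a := rpow_pos_of_pos hy0 a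
    rw [e1, e2, one_rpow, one_mul]
    field_simp
  rw [setLIntegral_congr_fun measurableSet_Ioi hptwise,
    lintegral_const_mul' _ _ ENNReal.ofReal_ne_top]
  have hGint : ∫⁻ y in Ioi (0:ℝ), ENNReal.ofReal (exp (-y) * y ^ (b - a - 1))
      = ENNReal.ofReal (Real.Gamma (b - a)) := by
    rw [Real.Gamma_eq_integral hd]
    rw [← ofReal_integral_eq_lintegral_ofReal (Real.GammaIntegral_convergent hd)
      ((ae_restrict_iff' measurableSet_Ioi).mpr (ae_of_all _ fun y hy => by
        have : (0:ℝ) < y := hy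
        positivity))]
  rw [hGint, ← ENNReal.ofReal_mul (by positivity)]
  congr 1
  field_simp

theorem stmt_11 {Ω : Type*} [MeasureSpace Ω] [IsProbabilityMeasure (ℙ : Measure Ω)]
    (a b : ℝ) (ha : 0 < a) (hb : 0 < b) (hne : a ≠ b) (α : ℝ) (hα : α = min a b)
    (X Y : Ω → ℝ) (hXm : Measurable X) (hYm : Measurable Y)
    (hX : Measure.map X ℙ = gammaMeasure a 1)
    (hY : Measure.map Y ℙ = gammaMeasure b 1)
    (hindep : IndepFun X Y ℙ) :
    ∀ s : ℝ, 0 < s →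
      (ℙ {ω | X ω * Y ω ≤ s}).toReal
        ≤ Real.Gamma |a - b| / (α * Real.Gamma a * Real.Gamma b) * s ^ α := by
  intro s hs
  rcases lt_or_gt_of_ne hne with hab | hba
  · have hα' : α = a := by rw [hα, min_eq_left hab.le]
    have habs : |a - b| = b - a := by
      rw [abs_of_neg (by linarith)]; ring
    rw [hα', habs]
    have hG := Real.Gamma_pos_of_pos (show (0:ℝ) < b - a by linarith)
    have hGa := Real.Gamma_pos_of_pos ha
    have hGb := Real.Gamma_pos_of_pos hb
    refine ENNReal.toReal_le_of_le_ofReal (by positivity) ?_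
    exact key_bound ha hab X Y hXm hYm hX hY hindep hs
  · have hα' : α = b := by rw [hα, min_eq_right hba.le]
    have habs : |a - b| = a - b := abs_of_pos (by linarith)
    rw [hα', habs]
    have hG := Real.Gamma_pos_of_pos (show (0:ℝ) < a - b by linarith)
    have hGa := Real.Gamma_pos_of_pos ha
    have hGb := Real.Gamma_pos_of_pos hb
    refine ENNReal.toReal_le_of_le_ofReal (by positivity) ?_
    have hset : {ω | X ω * Y ω ≤ s} = {ω | Y ω * X ω ≤ s} := by
      ext ω; simp [mul_comm]
    rw [hset, show b * Real.Gamma a * Real.Gamma b = b * Real.Gamma b * Real.Gamma a by ring]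
    exact key_bound hb hba Y X hYm hXm hY hX hindep.symm hs
end

section
/- Let X and Y be independent nonnegative real random variables, let α > 0, C ≥ 0 and M ≥ 0. Assume P(X ≤ s) ≤ M · s^{α} for all s > 0, that lim_{s → 0+} s^{−α} P(X ≤ s) = C, and that E[Y^{α}] < ∞. Then lim_{t → 0+} t^{−α} · P(X ≤ t·Y) = C · E[Y^{α}]. -/
open MeasureTheory ProbabilityTheory Real Set Filter

theorem stmt_12 {Ω : Type*} [MeasureSpace Ω] [IsProbabilityMeasure (ℙ : Measure Ω)]
    (X Y : Ω → ℝ) (hXm : Measurable X) (hYm : Measurable Y)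
    (hXnn : ∀ ω, 0 ≤ X ω) (hYnn : ∀ ω, 0 ≤ Y ω)
    (hindep : IndepFun X Y ℙ)
    (α C M : ℝ) (hα : 0 < α) (hC : 0 ≤ C) (hM : 0 ≤ M)
    (hbound : ∀ s : ℝ, 0 < s → (ℙ {ω | X ω ≤ s}).toReal ≤ M * s ^ α)
    (hlim : Tendsto (fun s : ℝ => s ^ (-α) * (ℙ {ω | X ω ≤ s}).toReal)
      (nhdsWithin 0 (Set.Ioi 0)) (nhds C))
    (hint : Integrable (fun ω => Y ω ^ α) ℙ) :
    Tendsto (fun t : ℝ => t ^ (-α) * (ℙ {ω | X ω ≤ t * Y ω}).toReal)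
      (nhdsWithin 0 (Set.Ioi 0))
      (nhds (C * ∫ ω, Y ω ^ α ∂ℙ)) := by
  set h : ℝ → ENNReal := fun s => ℙ {ω | X ω ≤ s} with hh
  have hmono : Monotone h := by
    intro a b hab
    exact measure_mono (fun ω hω => le_trans hω hab)
  have hhm : Measurable h := hmono.measurable
  set F : ℝ → ℝ := fun s => (h s).toReal with hF
  have hFm : Measurable F := ENNReal.measurable_toReal.comp hhm
  have hFmono : Monotone F := fun a b hab =>
    ENNReal.toReal_mono (measure_ne_top _ _) (hmono hab)
  have hFnn : ∀ s, 0 ≤ F s := fun s => ENNReal.toReal_nonneg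
  -- F 0 = 0
  have hF0 : F 0 = 0 := by
    have hle : ∀ s : ℝ, 0 < s → F 0 ≤ M * s ^ α := fun s hs =>
      le_trans (hFmono hs.le) (hbound s hs)
    by_contra hne
    have hpos : 0 < F 0 := lt_of_le_of_ne (hFnn 0) (Ne.symm hne)
    obtain ⟨s, hs, hs2⟩ : ∃ s : ℝ, 0 < s ∧ M * s ^ α < F 0 := by
      rcases eq_or_lt_of_le hM with hM0 | hMpos
      · exact ⟨1, one_pos, by rw [← hM0]; simpa using hpos⟩
      · refine ⟨(F 0 / (2 * M)) ^ (1/α), rpow_pos_of_pos (by positivity) _, ?_⟩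
        rw [← Real.rpow_mul (by positivity), one_div, inv_mul_cancel₀ hα.ne',
          Real.rpow_one]
        rw [mul_div_assoc']
        rw [div_lt_iff₀ (by positivity)]
        nlinarith [hpos]
    exact absurd (hle _ hs) (not_le.mpr hs2)
  -- key identity
  have key : ∀ t : ℝ, 0 < t →
      (ℙ {ω | X ω ≤ t * Y ω}).toReal = ∫ ω, F (t * Y ω) ∂ℙ := by
    intro t ht
    have hmap : Measure.map (fun ω => (Y ω, X ω)) ℙ
        = (Measure.map Y ℙ).prod (Measure.map X ℙ) :=
      (indepFun_iff_map_prod_eq_prod_map_map hYm.aemeasurable hXm.aemeasurable).mp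
        hindep.symm
    have hS : MeasurableSet {p : ℝ × ℝ | p.2 ≤ t * p.1} :=
      measurableSet_le measurable_snd (measurable_fst.const_mul t)
    have h1 : ℙ {ω | X ω ≤ t * Y ω}
        = ∫⁻ ω, h (t * Y ω) ∂ℙ := by
      have := Measure.map_apply (μ := (ℙ : Measure Ω)) (hYm.prodMk hXm) hS
      have hpre : (fun ω => (Y ω, X ω)) ⁻¹' {p : ℝ × ℝ | p.2 ≤ t * p.1}
          = {ω | X ω ≤ t * Y ω} := rfl
      rw [hpre] at this
      rw [← this, hmap, Measure.prod_apply hS]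
      have hsec : ∀ y : ℝ, (Prod.mk y ⁻¹' {p : ℝ × ℝ | p.2 ≤ t * p.1})
          = Set.Iic (t * y) := fun y => rfl
      simp_rw [hsec]
      have hIic : ∀ y : ℝ, Measure.map X ℙ (Set.Iic (t*y)) = h (t * y) := by
        intro y
        rw [Measure.map_apply hXm measurableSet_Iic]
        rfl
      simp_rw [hIic]
      exact lintegral_map (hhm.comp (measurable_const_mul t)) hYm
    rw [h1]
    exact (integral_toReal ((hhm.comp ((measurable_const_mul t).comp hYm)).aemeasurable)
      (Eventually.of_forall fun ω => measure_lt_top _ _)).symm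
  have hcg : (nhdsWithin (0:ℝ) (Set.Ioi 0)).IsCountablyGenerated := by infer_instance
  have hev : ∀ᶠ t in nhdsWithin (0:ℝ) (Set.Ioi 0), 0 < t := self_mem_nhdsWithin
  -- main convergence via dominated convergence
  have hint2 : Integrable (fun ω => M * Y ω ^ α) ℙ := hint.const_mul M
  have hmain : Tendsto (fun t : ℝ => ∫ ω, t ^ (-α) * F (t * Y ω) ∂ℙ)
      (nhdsWithin 0 (Set.Ioi 0)) (nhds (∫ ω, C * Y ω ^ α ∂ℙ)) := by
    apply tendsto_integral_filter_of_dominated_convergence (fun ω => M * Y ω ^ α)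
    · filter_upwards [hev] with t ht
      exact ((hFm.comp ((measurable_const_mul t).comp hYm)).const_mul _).aestronglyMeasurable
    · filter_upwards [hev] with t ht
      refine Eventually.of_forall fun ω => ?_
      rcases eq_or_lt_of_le (hYnn ω) with h0 | hpos
      · rw [← h0]
        simp [hF0, Real.zero_rpow hα.ne', mul_zero]
      · have h1 : F (t * Y ω) ≤ M * (t * Y ω) ^ α := hbound _ (by positivity)
        have h2 : (t * Y ω) ^ α = t ^ α * Y ω ^ α := Real.mul_rpow ht.le hpos.le
        rw [Real.norm_eq_abs, abs_of_nonneg (by positivity)]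
        calc t ^ (-α) * F (t * Y ω) ≤ t ^ (-α) * (M * (t ^ α * Y ω ^ α)) := by
              rw [← h2]; exact mul_le_mul_of_nonneg_left h1 (by positivity)
          _ = (t ^ (-α) * t ^ α) * (M * Y ω ^ α) := by ring
          _ = M * Y ω ^ α := by
              rw [← Real.rpow_add ht, neg_add_cancel, Real.rpow_zero, one_mul]
    · exact hint2
    · refine Eventually.of_forall fun ω => ?_
      rcases eq_or_lt_of_le (hYnn ω) with h0 | hpos
      · rw [← h0]
        simp only [mul_zero, hF0, Real.zero_rpow hα.ne']
        simpa using tendsto_const_nhds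
      · have hcomp : Tendsto (fun t : ℝ => t * Y ω) (nhdsWithin 0 (Set.Ioi 0))
            (nhdsWithin 0 (Set.Ioi 0)) := by
          refine tendsto_nhdsWithin_of_tendsto_nhds_of_eventually_within _ ?_ ?_
          · simpa using ((continuous_mul_right (Y ω)).tendsto (0:ℝ)).mono_left
              nhdsWithin_le_nhds
          · filter_upwards [self_mem_nhdsWithin] with t ht using mul_pos ht hpos
        have h2 := (hlim.comp hcomp).const_mul (Y ω ^ α)
        have heq : ∀ᶠ t in nhdsWithin (0:ℝ) (Set.Ioi 0),
            Y ω ^ α * ((fun s : ℝ => s ^ (-α) * F s) ((fun t : ℝ => t * Y ω) t))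
            = t ^ (-α) * F (t * Y ω) := by
          filter_upwards [hev] with t ht
          have : (t * Y ω) ^ (-α) = t ^ (-α) * (Y ω) ^ (-α) :=
            Real.mul_rpow ht.le hpos.le
          rw [this]
          have : Y ω ^ α * (Y ω) ^ (-α) = 1 := by
            rw [← Real.rpow_add hpos, add_neg_cancel, Real.rpow_zero]
          calc Y ω ^ α * (t ^ (-α) * Y ω ^ (-α) * F (t * Y ω))
              = (Y ω ^ α * Y ω ^ (-α)) * (t ^ (-α) * F (t * Y ω)) := by ring
            _ = t ^ (-α) * F (t * Y ω) := by rw [this, one_mul]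
        rw [mul_comm]
        exact Tendsto.congr' heq h2
  have hfin : (∫ ω, C * Y ω ^ α ∂ℙ) = C * ∫ ω, Y ω ^ α ∂ℙ := integral_const_mul _ _
  rw [← hfin]
  apply Tendsto.congr' _ hmain
  filter_upwards [hev] with t ht
  rw [key t ht, integral_const_mul]
end
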